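/- arXiv:1806.03164 — 9 statements merged into one kernel-verified Lean document; each statement's English description precedes it below -/
import Mathlib

section
/- Let T be a perfect Roman domination stable tree and let f be a γ_R^p-function of T. Then f(v) ≠ 1 for every vertex v ∈ V(T). -/
open SimpleGraph

/-- A perfect Roman dominating function: values in {0,1,2}, and every vertex with
value 0 has exactly one neighbor with value 2. -/
def IsPRDF {V : Type*} (G : SimpleGraph V) (f : V → ℕ) : Prop :=
  (∀ v, f v ≤ 2) ∧ ∀ u, f u = 0 → ∃! v, G.Adj u v ∧ f v = 2

/-- The perfect Roman domination number: minimum weight of a PRDF. -/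
noncomputable def prdn {V : Type*} [Fintype V] (G : SimpleGraph V) : ℕ :=
  sInf {w | ∃ f : V → ℕ, IsPRDF G f ∧ ∑ v, f v = w}

/-- A graph is perfect Roman domination stable if removing any vertex
leaves the perfect Roman domination number unchanged. -/
noncomputable def Stable {V : Type*} [Fintype V] [DecidableEq V] (G : SimpleGraph V) : Prop :=
  ∀ v : V, prdn (G.induce {u | u ≠ v}) = prdn G

/-- The set of vertices receiving 0 under every minimum-weight PRDF. -/
def Wset {V : Type*} [Fintype V] (G : SimpleGraph V) : Set V :=
  {u | ∀ f : V → ℕ, IsPRDF G f → (∑ v, f v) = prdn G → f u = 0}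

/-- Degree of a vertex. -/
noncomputable def deg {V : Type*} (G : SimpleGraph V) (v : V) : ℕ := (G.neighborSet v).ncard
/-- In a perfect Roman domination stable tree, no minimum PRDF
assigns the value 1 to any vertex. -/
theorem stmt0 {V : Type*} [Fintype V] [DecidableEq V] (T : SimpleGraph V)
    (hT : T.IsTree) (hstab : Stable T)
    (f : V → ℕ) (hf : IsPRDF T f) (hmin : ∑ v, f v = prdn T) :
    ∀ v : V, f v ≠ 1 := by
  intro v hv1
  -- restrict f to the vertex set without v
  set g : {u : V | u ≠ v} → ℕ := fun u => f u.val with hg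
  have hgPRDF : IsPRDF (T.induce {u : V | u ≠ v}) g := by
    constructor
    · intro u; exact hf.1 u.val
    · intro u hu
      obtain ⟨w, ⟨hadj, hw2⟩, huniq⟩ := hf.2 u.val hu
      have hwv : w ≠ v := by intro h; rw [h, hv1] at hw2; omega
      refine ⟨⟨w, hwv⟩, ⟨hadj, hw2⟩, ?_⟩
      rintro ⟨b, hb⟩ ⟨hadjb, hb2⟩
      exact Subtype.ext (huniq b ⟨hadjb, hb2⟩)
  have hsum : (∑ u : {u : V | u ≠ v}, g u) + f v = ∑ u, f u := by
    have h1 : (∑ u : {u : V | u ≠ v}, g u) = ∑ u ∈ Finset.univ.erase v, f u := by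
      exact (Finset.sum_subtype _ (fun x => by simp [Finset.mem_erase]) f).symm
    rw [h1]
    exact Finset.sum_erase_add _ _ (Finset.mem_univ v)
  have hle : prdn (T.induce {u : V | u ≠ v}) ≤ ∑ u : {u : V | u ≠ v}, g u :=
    Nat.sInf_le ⟨g, hgPRDF, rfl⟩
  have hst := hstab v
  have hge : 1 ≤ prdn T := by
    rw [← hmin]
    calc 1 = f v := hv1.symm
    _ ≤ ∑ u, f u := Finset.single_le_sum (fun _ _ => Nat.zero_le _) (Finset.mem_univ v)
  rw [hst] at hle
  omega
end

section
/- Let T be a perfect Roman domination stable tree and let f be a γ_R^p-function of T. Then f(v) ≠ 2 for every leaf v of T (a leaf is a vertex of degree 1). -/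
open SimpleGraph

/-- In a perfect Roman domination stable tree, no minimum PRDF
assigns the value 2 to a leaf. -/
theorem stmt1 {V : Type*} [Fintype V] [DecidableEq V] (T : SimpleGraph V)
    (hT : T.IsTree) (hstab : Stable T)
    (f : V → ℕ) (hf : IsPRDF T f) (hmin : ∑ v, f v = prdn T) :
    ∀ v : V, deg T v = 1 → f v ≠ 2 := by
  intro v hdeg hfv
  obtain ⟨u, hu⟩ := Set.ncard_eq_one.mp hdeg
  -- u is the unique neighbor of v
  have hadj : ∀ x, T.Adj x v ↔ x = u := by
    intro x
    rw [adj_comm, ← SimpleGraph.mem_neighborSet, hu, Set.mem_singleton_iff]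
  have huv : u ≠ v := by
    intro h
    have : T.Adj u v := (hadj u).mpr rfl
    exact (T.irrefl (h ▸ this))
  -- the subtype vertex corresponding to u
  set S : Set V := {x | x ≠ v} with hS
  have huS : u ∈ S := huv
  set u' : S := ⟨u, huS⟩ with hu'
  -- new function on T - v
  set g : S → ℕ := Function.update (fun x : S => f x) u' (max (f u) 1) with hg
  have hg_eval : ∀ x : S, (x : V) ≠ u → g x = f x := by
    intro x hx
    have : x ≠ u' := fun h => hx (by rw [h])
    simp [hg, Function.update_of_ne this]
  have hg_two : ∀ x : S, g x = 2 → f x = 2 := by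
    intro x hx
    by_cases h : x = u'
    · subst h
      simp only [hg, Function.update_self] at hx
      have := hf.1 u
      have : f u = 2 := by omega
      simpa [hu'] using this
    · rwa [hg, Function.update_of_ne h] at hx
  have hg_two' : ∀ x : S, f x = 2 → g x = 2 := by
    intro x hx
    by_cases h : x = u'
    · subst h
      simp only [hg, Function.update_self]
      simp only [hu'] at hx
      omega
    · rwa [hg, Function.update_of_ne h]
  -- g is a PRDF on the induced graph
  have hPRDF : IsPRDF (T.induce S) g := by
    constructor
    · intro x
      by_cases h : x = u'
      · subst h
        simp only [hg, Function.update_self]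
        have := hf.1 u
        omega
      · rw [hg, Function.update_of_ne h]; exact hf.1 _
    · intro x hx
      have hxu : x ≠ u' := by
        intro h
        subst h
        simp only [hg, Function.update_self] at hx
        omega
      have hxu' : (x : V) ≠ u := fun h => hxu (Subtype.ext h)
      have hfx : f x = 0 := by rwa [hg, Function.update_of_ne hxu] at hx
      obtain ⟨w, ⟨hw1, hw2⟩, hwu⟩ := hf.2 x hfx
      have hwv : w ≠ v := by
        intro h
        subst h
        exact hxu' ((hadj x).mp hw1)
      refine ⟨⟨w, hwv⟩, ⟨?_, hg_two' _ hw2⟩, ?_⟩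
      · simpa [SimpleGraph.comap_adj] using hw1
      · rintro ⟨y, hy⟩ ⟨hy1, hy2⟩
        have : T.Adj (x : V) y := by simpa [SimpleGraph.comap_adj] using hy1
        have := hwu y ⟨this, hg_two _ hy2⟩
        exact Subtype.ext this
  -- weight estimate
  have hgw : prdn (T.induce S) ∈ {w | ∃ h : S → ℕ, IsPRDF (T.induce S) h ∧ ∑ x, h x = w} →
      True := fun _ => trivial
  have hle : prdn (T.induce S) ≤ ∑ x : S, g x :=
    Nat.sInf_le ⟨g, hPRDF, rfl⟩
  -- compute the sums
  have hsum_g : ∑ x : S, g x = max (f u) 1 + ∑ x ∈ Finset.univ.erase u', f (x : V) := by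
    rw [hg, Finset.sum_update_of_mem (Finset.mem_univ u')]
    rw [Finset.sdiff_singleton_eq_erase]
  have hsum_f : ∑ x : S, f (x : V) = f u + ∑ x ∈ Finset.univ.erase u', f (x : V) := by
    exact (Finset.add_sum_erase _ (fun x : S => f (x : V)) (Finset.mem_univ u')).symm
  have hsum_tot : ∑ x : V, f x = f v + ∑ x : S, f (x : V) := by
    have h1 : ∑ x ∈ Finset.univ.erase v, f x = ∑ x : S, f (x : V) :=
      Finset.sum_subtype (Finset.univ.erase v)
        (fun x => by simp [S, Finset.mem_erase]) (fun x => f x)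
    rw [← h1, Finset.add_sum_erase _ _ (Finset.mem_univ v)]
  -- conclude
  have hle2 : ∑ x : S, g x ≤ ∑ x : S, f (x : V) + 1 := by
    have := hf.1 u
    omega
  have hprdn2 : 2 ≤ prdn T := by
    rw [← hmin, hsum_tot, hfv]
    omega
  rw [hstab v] at hle
  omega
end

section
/- Let T be a perfect Roman domination stable tree and let f be a γ_R^p-function of T. Suppose T contains vertices x_1, x_2, x_3, x_4, y_1 such that x_2 is adjacent to x_1, y_1 and x_3, the vertices x_1 and y_1 are leaves of T, x_3 has degree 2 in T, and x_3 is adjacent to x_4. Then f(x_2) = 2 and f(x_1) = f(y_1) = f(x_3) = f(x_4) = 0. -/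
open SimpleGraph

private lemma nbr_one {V : Type*} (T : SimpleGraph V) {x y : V}
    (hdeg : deg T x = 1) (hxy : T.Adj x y) : ∀ z, T.Adj x z → z = y := by
  intro z hz
  rw [deg, Set.ncard_eq_one] at hdeg
  obtain ⟨a, ha⟩ := hdeg
  have h1 : y ∈ T.neighborSet x := hxy
  have h2 : z ∈ T.neighborSet x := hz
  rw [ha, Set.mem_singleton_iff] at h1 h2
  rw [h1, h2]

private lemma nbr_two {V : Type*} (T : SimpleGraph V) {x a b : V}
    (hdeg : deg T x = 2) (hxa : T.Adj x a) (hxb : T.Adj x b) (hab : a ≠ b) :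
    ∀ z, T.Adj x z → z = a ∨ z = b := by
  intro z hz
  rw [deg, Set.ncard_eq_two] at hdeg
  obtain ⟨p, q, hpq, hset⟩ := hdeg
  have h1 : a ∈ T.neighborSet x := hxa
  have h2 : b ∈ T.neighborSet x := hxb
  have h3 : z ∈ T.neighborSet x := hz
  rw [hset] at h1 h2 h3
  simp only [Set.mem_insert_iff, Set.mem_singleton_iff] at h1 h2 h3
  rcases h1 with h1 | h1 <;> rcases h2 with h2 | h2 <;> rcases h3 with h3 | h3 <;>
    subst_vars <;> tauto

private lemma sum_update {V : Type*} [Fintype V] [DecidableEq V] (f : V → ℕ) (a : V) (c : ℕ) :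
    (∑ v, Function.update f a c v) + f a = (∑ v, f v) + c := by
  rw [Finset.sum_update_of_mem (Finset.mem_univ a)]
  rw [← Finset.add_sum_erase _ f (Finset.mem_univ a)]
  simp [Finset.sdiff_singleton_eq_erase]
  ring

/-- pendant star configuration forces the values of a minimum PRDF. -/
theorem stmt2 {V : Type*} [Fintype V] [DecidableEq V] (T : SimpleGraph V)
    (hT : T.IsTree) (hstab : Stable T)
    (f : V → ℕ) (hf : IsPRDF T f) (hmin : ∑ v, f v = prdn T)
    (x1 x2 x3 x4 y1 : V)
    (h21 : T.Adj x2 x1) (h2y : T.Adj x2 y1) (h23 : T.Adj x2 x3)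
    (hx1leaf : deg T x1 = 1) (hy1leaf : deg T y1 = 1) (hx1y1 : x1 ≠ y1)
    (hx3deg : deg T x3 = 2) (h34 : T.Adj x3 x4) (hx4x2 : x4 ≠ x2) :
    f x2 = 2 ∧ f x1 = 0 ∧ f y1 = 0 ∧ f x3 = 0 ∧ f x4 = 0 := by
  classical
  have hx1nb := nbr_one T hx1leaf h21.symm
  have hy1nb := nbr_one T hy1leaf h2y.symm
  have hx3nb := nbr_two T hx3deg h23.symm h34 (Ne.symm hx4x2)
  -- minimality tool: any PRDF g of T has weight ≥ weight of f
  have hmin' : ∀ g : V → ℕ, IsPRDF T g → (∑ v, f v) ≤ ∑ v, g v := by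
    intro g hg
    rw [hmin]
    exact Nat.sInf_le ⟨g, hg, rfl⟩
  -- Step 1: no vertex receives value 1 (uses stability)
  have hno1 : ∀ v, f v ≠ 1 := by
    intro v hv
    have hstabv := hstab v
    set s : Set V := {u | u ≠ v} with hs
    set g : s → ℕ := fun u => f u with hg
    have hgPRDF : IsPRDF (T.induce s) g := by
      constructor
      · intro u; exact hf.1 u
      · rintro ⟨u, hu⟩ h0
        obtain ⟨z, ⟨hz, hz2⟩, huniq⟩ := hf.2 u h0
        have hzv : z ≠ v := fun h => by rw [h, hv] at hz2; omega
        refine ⟨⟨z, hzv⟩, ⟨?_, hz2⟩, ?_⟩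
        · simpa [comap_adj] using hz
        · rintro ⟨z', hz'v⟩ ⟨hadj', hval'⟩
          have : T.Adj u z' := by simpa [comap_adj] using hadj'
          have := huniq z' ⟨this, hval'⟩
          exact Subtype.ext this
    have hsum : (∑ u : s, g u) + f v = ∑ u, f u := by
      have key : (∑ x ∈ Finset.univ.erase v, f x) = ∑ a : s, g a :=
        Finset.sum_subtype (Finset.univ.erase v)
          (fun x => by simp [hs]) f
      rw [← key]
      rw [add_comm]
      exact Finset.add_sum_erase _ f (Finset.mem_univ v)
    have hle : prdn (T.induce s) ≤ ∑ u : s, g u := Nat.sInf_le ⟨g, hgPRDF, rfl⟩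
    rw [hstabv, ← hmin] at hle
    omega
  have hval : ∀ v, f v = 0 ∨ f v = 2 := by
    intro v
    have := hf.1 v
    have := hno1 v
    omega
  have hx12 : x1 ≠ x2 := h21.symm.ne
  have hy12 : y1 ≠ x2 := h2y.symm.ne
  have hx23 : x2 ≠ x3 := h23.ne
  have hx34 : x3 ≠ x4 := h34.ne
  -- Step 2: f x2 = 2
  have hfx2 : f x2 = 2 := by
    rcases hval x2 with h0 | h2
    · exfalso
      have hfx1 : f x1 = 2 := by
        rcases hval x1 with h | h
        · exfalso
          obtain ⟨z, ⟨hz, hz2⟩, _⟩ := hf.2 x1 h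
          rw [hx1nb z hz, h0] at hz2
          omega
        · exact h
      have hfy1 : f y1 = 2 := by
        rcases hval y1 with h | h
        · exfalso
          obtain ⟨z, ⟨hz, hz2⟩, _⟩ := hf.2 y1 h
          rw [hy1nb z hz, h0] at hz2
          omega
        · exact h
      obtain ⟨z, _, huniq⟩ := hf.2 x2 h0
      have e1 := huniq x1 ⟨h21, hfx1⟩
      have e2 := huniq y1 ⟨h2y, hfy1⟩
      exact hx1y1 (e1.trans e2.symm)
    · exact h2
  -- Step 3: f x1 = 0 and f y1 = 0
  have leaf0 : ∀ u : V, T.Adj x2 u → (∀ z, T.Adj u z → z = x2) → f u = 0 := by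
    intro u hadj hunb
    rcases hval u with h | h
    · exact h
    · exfalso
      set g := Function.update f u 0 with hg
      have hu2 : u ≠ x2 := hadj.symm.ne
      have hgPRDF : IsPRDF T g := by
        constructor
        · intro w
          rcases eq_or_ne w u with rfl | hw
          · simp [hg]
          · simp [hg, Function.update_of_ne hw]; exact hf.1 w
        · intro w hw0
          rcases eq_or_ne w u with rfl | hw
          · refine ⟨x2, ⟨hadj.symm, ?_⟩, ?_⟩
            · rw [hg, Function.update_of_ne (Ne.symm hu2), hfx2]
            · rintro z ⟨hz, _⟩
              exact hunb z hz
          · rw [hg, Function.update_of_ne hw] at hw0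
            obtain ⟨z, ⟨hz, hz2⟩, huniq⟩ := hf.2 w hw0
            have hzu : z ≠ u := by
              intro hzu
              rw [hzu] at hz
              have := hunb w hz.symm
              rw [this, hfx2] at hw0
              omega
            refine ⟨z, ⟨hz, by rw [hg, Function.update_of_ne hzu]; exact hz2⟩, ?_⟩
            rintro z' ⟨hz', hz'2⟩
            have hz'u : z' ≠ u := by
              intro h'
              rw [h', hg, Function.update_self] at hz'2
              omega
            rw [hg, Function.update_of_ne hz'u] at hz'2
            exact huniq z' ⟨hz', hz'2⟩
      have := hmin' g hgPRDF
      have hsum := sum_update f u 0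
      rw [← hg] at hsum
      omega
  have hfx1 : f x1 = 0 := leaf0 x1 h21 hx1nb
  have hfy1 : f y1 = 0 := leaf0 y1 h2y hy1nb
  -- Step 4: f x3 = 0
  have hfx3 : f x3 = 0 := by
    rcases hval x3 with h | h
    · exact h
    · exfalso
      rcases hval x4 with h4 | h4
      · -- g = update (update f x3 0) x4 1
        set g := Function.update (Function.update f x3 0) x4 1 with hg
        have hgx3 : g x3 = 0 := by
          rw [hg, Function.update_of_ne hx34, Function.update_self]
        have hgx4 : g x4 = 1 := by rw [hg, Function.update_self]
        have hgother : ∀ w, w ≠ x3 → w ≠ x4 → g w = f w := by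
          intro w hw3 hw4
          rw [hg, Function.update_of_ne hw4, Function.update_of_ne hw3]
        have hgx2 : g x2 = 2 := by
          rw [hgother x2 hx23 (Ne.symm hx4x2)]; exact hfx2
        have hgPRDF : IsPRDF T g := by
          constructor
          · intro w
            rcases eq_or_ne w x3 with rfl | hw3
            · omega
            rcases eq_or_ne w x4 with rfl | hw4
            · omega
            · rw [hgother w hw3 hw4]; exact hf.1 w
          · intro w hw0
            rcases eq_or_ne w x3 with rfl | hw3
            · refine ⟨x2, ⟨h23.symm, hgx2⟩, ?_⟩
              rintro z ⟨hz, hz2⟩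
              rcases hx3nb z hz with rfl | rfl
              · rfl
              · rw [hgx4] at hz2; omega
            rcases eq_or_ne w x4 with rfl | hw4
            · rw [hgx4] at hw0; omega
            · rw [hgother w hw3 hw4] at hw0
              obtain ⟨z, ⟨hz, hz2⟩, huniq⟩ := hf.2 w hw0
              have hz3 : z ≠ x3 := by
                intro hzx
                subst hzx
                rcases hx3nb w hz.symm with rfl | rfl
                · rw [hfx2] at hw0; omega
                · exact hw4 rfl
              have hz4 : z ≠ x4 := by
                intro hzx; rw [hzx, h4] at hz2; omega
              refine ⟨z, ⟨hz, by rw [hgother z hz3 hz4]; exact hz2⟩, ?_⟩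
              rintro z' ⟨hz', hz'2⟩
              have hz'3 : z' ≠ x3 := by
                intro h'; rw [h', hgx3] at hz'2; omega
              have hz'4 : z' ≠ x4 := by
                intro h'; rw [h', hgx4] at hz'2; omega
              rw [hgother z' hz'3 hz'4] at hz'2
              exact huniq z' ⟨hz', hz'2⟩
        have hle := hmin' g hgPRDF
        have hs1 := sum_update f x3 0
        have hs2 := sum_update (Function.update f x3 0) x4 1
        rw [← hg] at hs2
        have : Function.update f x3 0 x4 = f x4 :=
          Function.update_of_ne (Ne.symm hx34) _ _
        rw [this] at hs2
        omega
      · -- f x4 = 2 : g = update f x3 1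
        set g := Function.update f x3 1 with hg
        have hgx3 : g x3 = 1 := by rw [hg, Function.update_self]
        have hgother : ∀ w, w ≠ x3 → g w = f w := by
          intro w hw3; rw [hg, Function.update_of_ne hw3]
        have hgPRDF : IsPRDF T g := by
          constructor
          · intro w
            rcases eq_or_ne w x3 with rfl | hw3
            · omega
            · rw [hgother w hw3]; exact hf.1 w
          · intro w hw0
            rcases eq_or_ne w x3 with rfl | hw3
            · rw [hgx3] at hw0; omega
            · rw [hgother w hw3] at hw0
              obtain ⟨z, ⟨hz, hz2⟩, huniq⟩ := hf.2 w hw0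
              have hz3 : z ≠ x3 := by
                intro hzx
                subst hzx
                rcases hx3nb w hz.symm with rfl | rfl
                · rw [hfx2] at hw0; omega
                · rw [h4] at hw0; omega
              refine ⟨z, ⟨hz, by rw [hgother z hz3]; exact hz2⟩, ?_⟩
              rintro z' ⟨hz', hz'2⟩
              have hz'3 : z' ≠ x3 := by
                intro h'; rw [h', hgx3] at hz'2; omega
              rw [hgother z' hz'3] at hz'2
              exact huniq z' ⟨hz', hz'2⟩
        have hle := hmin' g hgPRDF
        have hs1 := sum_update f x3 1
        rw [← hg] at hs1
        omega
  -- Step 5: f x4 = 0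
  have hfx4 : f x4 = 0 := by
    rcases hval x4 with h | h
    · exact h
    · exfalso
      obtain ⟨z, _, huniq⟩ := hf.2 x3 hfx3
      have e1 := huniq x2 ⟨h23.symm, hfx2⟩
      have e2 := huniq x4 ⟨h34, h⟩
      exact hx4x2 (e2.trans e1.symm)
  exact ⟨hfx2, hfx1, hfy1, hfx3, hfx4⟩
end

section
/- Let G be a graph and u ∈ V(G). If G' is the graph obtained from G by adding three new vertices v_1, v_2, v_3, the path edges v_3v_2 and v_2v_1, and the edge uv_3, then γ_R^p(G') = γ_R^p(G) + 2. -/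
open SimpleGraph

lemma arith_a (a b c : ℕ) (h1 : a = 0 → b = 2) (h2 : c = 2) : 3 ≤ a + b + c := by
  by_cases h : a = 0
  · have := h1 h; omega
  · omega

lemma arith_b (a b c : ℕ) (h1 : a = 0 → b = 2) (h2 : b = 0 → a = 2 ∨ c = 2) (h3 : c ≠ 2) :
    2 ≤ a + b + c := by
  rcases Nat.lt_or_ge b 2 with hb2 | hb2
  · interval_cases b
    · rcases h2 rfl with h | h <;> omega
    · by_cases h : a = 0
      · have := h1 h; omega
      · omega
  · omega

lemma arith_c (p q S s : ℕ) (h : q = S + s) (h3 : 3 ≤ s) (hle : p ≤ S + 1) : p + 2 ≤ q := by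
  omega

lemma arith_d (p q S s : ℕ) (h : q = S + s) (h2 : 2 ≤ s) (hle : p ≤ S) : p + 2 ≤ q := by
  omega

/-- attaching a pendant path `u - v₃ - v₂ - v₁` (with v₁ = inr 0,
v₂ = inr 1, v₃ = inr 2) increases the perfect Roman domination number by exactly 2. -/
theorem stmt3 {V : Type*} [Fintype V] [DecidableEq V] (G : SimpleGraph V) (u : V)
    (G' : SimpleGraph (V ⊕ Fin 3))
    (hadj : ∀ a b : V ⊕ Fin 3, G'.Adj a b ↔
      ((∃ x y : V, a = Sum.inl x ∧ b = Sum.inl y ∧ G.Adj x y) ∨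
       (a = Sum.inl u ∧ b = Sum.inr 2) ∨ (a = Sum.inr 2 ∧ b = Sum.inl u) ∨
       (a = Sum.inr 2 ∧ b = Sum.inr 1) ∨ (a = Sum.inr 1 ∧ b = Sum.inr 2) ∨
       (a = Sum.inr 1 ∧ b = Sum.inr 0) ∨ (a = Sum.inr 0 ∧ b = Sum.inr 1))) :
    prdn G' = prdn G + 2 := by
  classical
  have AL : ∀ (x : V) (w : V ⊕ Fin 3), G'.Adj (Sum.inl x) w ↔
      ((∃ y, G.Adj x y ∧ w = Sum.inl y) ∨ (x = u ∧ w = Sum.inr 2)) := by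
    intro x w
    rw [hadj]
    constructor
    · rintro (⟨p, q, hp, hq, hpq⟩ | ⟨h1, h2⟩ | ⟨h1, h2⟩ | ⟨h1, h2⟩ | ⟨h1, h2⟩ |
        ⟨h1, h2⟩ | ⟨h1, h2⟩)
      · obtain rfl := Sum.inl.inj hp
        exact Or.inl ⟨q, hpq, hq⟩
      · exact Or.inr ⟨Sum.inl.inj h1, h2⟩
      all_goals simp at h1
    · rintro (⟨y, hy, rfl⟩ | ⟨rfl, rfl⟩)
      · exact Or.inl ⟨x, y, rfl, rfl, hy⟩
      · tauto
  have A0 : ∀ w, G'.Adj (Sum.inr 0) w ↔ w = Sum.inr 1 := by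
    intro w
    rw [hadj]
    constructor
    · rintro (⟨p, q, hp, hq, hpq⟩ | ⟨h1, h2⟩ | ⟨h1, h2⟩ | ⟨h1, h2⟩ | ⟨h1, h2⟩ |
        ⟨h1, h2⟩ | ⟨h1, h2⟩)
      · simp at hp
      all_goals first
        | exact h2
        | simp at h1
        | exact absurd (Sum.inr.inj h1) (by decide)
    · rintro rfl; tauto
  have A1 : ∀ w, G'.Adj (Sum.inr 1) w ↔ (w = Sum.inr 0 ∨ w = Sum.inr 2) := by
    intro w
    rw [hadj]
    constructor
    · rintro (⟨p, q, hp, hq, hpq⟩ | ⟨h1, h2⟩ | ⟨h1, h2⟩ | ⟨h1, h2⟩ | ⟨h1, h2⟩ |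
        ⟨h1, h2⟩ | ⟨h1, h2⟩)
      · simp at hp
      all_goals first
        | exact Or.inl h2
        | exact Or.inr h2
        | simp at h1
        | exact absurd (Sum.inr.inj h1) (by decide)
    · rintro (rfl | rfl) <;> tauto
  have A2 : ∀ w, G'.Adj (Sum.inr 2) w ↔ (w = Sum.inl u ∨ w = Sum.inr 1) := by
    intro w
    rw [hadj]
    constructor
    · rintro (⟨p, q, hp, hq, hpq⟩ | ⟨h1, h2⟩ | ⟨h1, h2⟩ | ⟨h1, h2⟩ | ⟨h1, h2⟩ |
        ⟨h1, h2⟩ | ⟨h1, h2⟩)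
      · simp at hp
      all_goals first
        | exact Or.inl h2
        | exact Or.inr h2
        | simp at h1
        | exact absurd (Sum.inr.inj h1) (by decide)
    · rintro (rfl | rfl) <;> tauto
  -- nonemptiness of weight sets
  have hneG : {w | ∃ f : V → ℕ, IsPRDF G f ∧ ∑ v, f v = w}.Nonempty :=
    ⟨∑ _v : V, 1, fun _ => 1, ⟨fun _ => one_le_two, fun _ h => absurd h one_ne_zero⟩, rfl⟩
  have hneG' : {w | ∃ f : V ⊕ Fin 3 → ℕ, IsPRDF G' f ∧ ∑ v, f v = w}.Nonempty :=
    ⟨∑ _v : V ⊕ Fin 3, 1, fun _ => 1, ⟨fun _ => one_le_two, fun _ h => absurd h one_ne_zero⟩, rfl⟩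
  -- UPPER BOUND
  have hub : prdn G' ≤ prdn G + 2 := by
    obtain ⟨f, hf, hwf0⟩ := Nat.sInf_mem hneG
    have hwf : ∑ v, f v = prdn G := hwf0
    by_cases hu2 : f u = 2
    · -- extend with (1,1,0)
      set φ : V ⊕ Fin 3 → ℕ := Sum.elim f ![1, 1, 0] with hφ
      have hPR : IsPRDF G' φ := by
        constructor
        · rintro (x | i)
          · exact hf.1 x
          · fin_cases i <;> simp [hφ]
        · rintro (x | i) h
          · obtain ⟨v, ⟨hv1, hv2⟩, hvu⟩ := hf.2 x h
            refine ⟨Sum.inl v, ⟨(AL x _).2 (Or.inl ⟨v, hv1, rfl⟩), hv2⟩, ?_⟩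
            rintro w ⟨hw1, hw2⟩
            rcases (AL x w).1 hw1 with ⟨y, hxy, rfl⟩ | ⟨rfl, rfl⟩
            · exact congrArg Sum.inl (hvu y ⟨hxy, hw2⟩)
            · simp [hφ] at hw2
          · fin_cases i
            · simp [hφ] at h
            · simp [hφ] at h
            · refine ⟨Sum.inl u, ⟨(A2 _).2 (Or.inl rfl), by simpa [hφ] using hu2⟩, ?_⟩
              rintro w ⟨hw1, hw2⟩
              rcases (A2 w).1 hw1 with rfl | rfl
              · rfl
              · simp [hφ] at hw2
      have : (∑ v, φ v) = prdn G + 2 := by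
        rw [Fintype.sum_sum_type, Fin.sum_univ_three]
        simp only [hφ, Sum.elim_inl, Sum.elim_inr]
        simp [hwf]
      exact Nat.sInf_le ⟨φ, hPR, this⟩
    · -- extend with (0,2,0)
      set φ : V ⊕ Fin 3 → ℕ := Sum.elim f ![0, 2, 0] with hφ
      have hPR : IsPRDF G' φ := by
        constructor
        · rintro (x | i)
          · exact hf.1 x
          · fin_cases i <;> simp [hφ]
        · rintro (x | i) h
          · obtain ⟨v, ⟨hv1, hv2⟩, hvu⟩ := hf.2 x h
            refine ⟨Sum.inl v, ⟨(AL x _).2 (Or.inl ⟨v, hv1, rfl⟩), hv2⟩, ?_⟩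
            rintro w ⟨hw1, hw2⟩
            rcases (AL x w).1 hw1 with ⟨y, hxy, rfl⟩ | ⟨rfl, rfl⟩
            · exact congrArg Sum.inl (hvu y ⟨hxy, hw2⟩)
            · simp [hφ] at hw2
          · fin_cases i
            · refine ⟨Sum.inr 1, ⟨(A0 _).2 rfl, by simp [hφ]⟩, ?_⟩
              rintro w ⟨hw1, hw2⟩
              exact (A0 w).1 hw1
            · simp [hφ] at h
            · refine ⟨Sum.inr 1, ⟨(A2 _).2 (Or.inr rfl), by simp [hφ]⟩, ?_⟩
              rintro w ⟨hw1, hw2⟩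
              rcases (A2 w).1 hw1 with rfl | rfl
              · exact absurd hw2 (by simpa [hφ] using hu2)
              · rfl
      have : (∑ v, φ v) = prdn G + 2 := by
        rw [Fintype.sum_sum_type, Fin.sum_univ_three]
        simp only [hφ, Sum.elim_inl, Sum.elim_inr]
        simp [hwf]
      exact Nat.sInf_le ⟨φ, hPR, this⟩
  -- LOWER BOUND
  have hlb : prdn G + 2 ≤ prdn G' := by
    obtain ⟨f', hf', hwf0'⟩ := Nat.sInf_mem hneG'
    have hwf' : ∑ v, f' v = prdn G' := hwf0'
    obtain ⟨F, hF⟩ : ∃ F : V → ℕ, F = fun x => f' (Sum.inl x) := ⟨_, rfl⟩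
    obtain ⟨a, ha⟩ : ∃ n : ℕ, n = f' (Sum.inr 0) := ⟨_, rfl⟩
    obtain ⟨b, hb⟩ : ∃ n : ℕ, n = f' (Sum.inr 1) := ⟨_, rfl⟩
    obtain ⟨c, hc⟩ : ∃ n : ℕ, n = f' (Sum.inr 2) := ⟨_, rfl⟩
    have hsum : prdn G' = (∑ x, F x) + (a + b + c) := by
      rw [hF, ha, hb, hc, ← hwf', Fintype.sum_sum_type, Fin.sum_univ_three]
    -- basic constraints
    have fact1 : a = 0 → b = 2 := by
      intro h0
      obtain ⟨v, ⟨hv1, hv2⟩, -⟩ := hf'.2 (Sum.inr 0) (by rw [← ha]; exact h0)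
      rw [(A0 v).1 hv1] at hv2
      rw [hb]
      exact hv2
    have fact2 : b = 0 → (a = 2 ∨ c = 2) := by
      intro h0
      obtain ⟨v, ⟨hv1, hv2⟩, -⟩ := hf'.2 (Sum.inr 1) (by rw [← hb]; exact h0)
      rcases (A1 v).1 hv1 with rfl | rfl
      · exact Or.inl (by rw [ha]; exact hv2)
      · exact Or.inr (by rw [hc]; exact hv2)
    by_cases hc2 : c = 2
    · -- pendant support vertex has label 2
      have hs3 : 3 ≤ a + b + c := arith_a a b c fact1 hc2
      by_cases hm : F u = 0
      · -- unique 2-neighbor of u in G' is inr 2; update F at u to 1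
        have hm' : f' (Sum.inl u) = 0 := by rw [hF] at hm; exact hm
        obtain ⟨v, hv, hvu⟩ := hf'.2 (Sum.inl u) hm'
        have hveq : v = Sum.inr 2 :=
          (hvu (Sum.inr 2) ⟨(AL u _).2 (Or.inr ⟨rfl, rfl⟩), by rw [← hc]; exact hc2⟩).symm
        set g : V → ℕ := Function.update F u 1 with hg
        have hgPR : IsPRDF G g := by
          constructor
          · intro x
            by_cases hx : x = u
            · subst hx; simp [hg]
            · rw [hg, Function.update_of_ne hx, hF]
              exact hf'.1 (Sum.inl x)
          · intro x hx
            have hxu : x ≠ u := by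
              intro h; subst h; simp [hg] at hx
            have hFx : f' (Sum.inl x) = 0 := by
              have hx' : F x = 0 := by
                rw [hg, Function.update_of_ne hxu] at hx
                exact hx
              rw [hF] at hx'
              exact hx'
            obtain ⟨w, ⟨hw1, hw2⟩, hwu⟩ := hf'.2 (Sum.inl x) hFx
            rcases (AL x w).1 hw1 with ⟨y, hxy, rfl⟩ | ⟨rfl, -⟩
            · have hyu : y ≠ u := by
                intro h
                rw [h, hm'] at hw2
                exact absurd hw2 (by decide)
              refine ⟨y, ⟨hxy, by rw [hg, Function.update_of_ne hyu, hF]; exact hw2⟩, ?_⟩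
              rintro z ⟨hz1, hz2⟩
              have hzu : z ≠ u := by
                intro h; subst h; simp [hg] at hz2
              have hz2' : f' (Sum.inl z) = 2 := by
                rw [hg, Function.update_of_ne hzu, hF] at hz2
                exact hz2
              exact Sum.inl.inj (hwu (Sum.inl z) ⟨(AL x _).2 (Or.inl ⟨z, hz1, rfl⟩), hz2'⟩)
            · exact absurd rfl hxu
        have hgsum : (∑ x, g x) = (∑ x, F x) + 1 := by
          rw [hg, Finset.sum_update_of_mem (Finset.mem_univ u),
            ← Finset.sum_erase_add Finset.univ F (Finset.mem_univ u), hm,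
            Finset.sdiff_singleton_eq_erase]
          ring
        have hle : prdn G ≤ (∑ x, F x) + 1 := hgsum ▸ Nat.sInf_le ⟨g, hgPR, rfl⟩
        exact arith_c _ _ _ _ hsum hs3 hle
      · -- f' restricted to V is already a PRDF on G
        have hgPR : IsPRDF G F := by
          constructor
          · intro x; rw [hF]; exact hf'.1 (Sum.inl x)
          · intro x hx
            rw [hF] at hx
            obtain ⟨w, ⟨hw1, hw2⟩, hwu⟩ := hf'.2 (Sum.inl x) hx
            rcases (AL x w).1 hw1 with ⟨y, hxy, rfl⟩ | ⟨rfl, -⟩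
            · refine ⟨y, ⟨hxy, by rw [hF]; exact hw2⟩, ?_⟩
              rintro z ⟨hz1, hz2⟩
              rw [hF] at hz2
              exact Sum.inl.inj (hwu (Sum.inl z) ⟨(AL x _).2 (Or.inl ⟨z, hz1, rfl⟩), hz2⟩)
            · rw [hF] at hm; exact absurd hx hm
        have hle : prdn G ≤ ∑ x, F x := Nat.sInf_le ⟨F, hgPR, rfl⟩
        exact arith_d _ _ _ _ hsum (Nat.le_of_succ_le hs3) hle
    · -- c ≠ 2 : restriction works, and a + b + c ≥ 2
      have hs2 : 2 ≤ a + b + c := arith_b a b c fact1 fact2 hc2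
      have hgPR : IsPRDF G F := by
        constructor
        · intro x; rw [hF]; exact hf'.1 (Sum.inl x)
        · intro x hx
          rw [hF] at hx
          obtain ⟨w, ⟨hw1, hw2⟩, hwu⟩ := hf'.2 (Sum.inl x) hx
          rcases (AL x w).1 hw1 with ⟨y, hxy, rfl⟩ | ⟨rfl, rfl⟩
          · refine ⟨y, ⟨hxy, by rw [hF]; exact hw2⟩, ?_⟩
            rintro z ⟨hz1, hz2⟩
            rw [hF] at hz2
            exact Sum.inl.inj (hwu (Sum.inl z) ⟨(AL x _).2 (Or.inl ⟨z, hz1, rfl⟩), hz2⟩)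
          · exact absurd (by rw [hc]; exact hw2) hc2
      have hle : prdn G ≤ ∑ x, F x := Nat.sInf_le ⟨F, hgPR, rfl⟩
      exact arith_d _ _ _ _ hsum hs2 hle
  exact le_antisymm hub hlb
end

section
/- Let T be a perfect Roman domination stable tree and let u ∈ W(T). If T' is the tree obtained from T by adding a single new vertex v and the edge uv, then γ_R^p(T') = γ_R^p(T) + 1. -/
open SimpleGraph

/-- attaching a pendant vertex at a vertex of `W(T)` of a stable tree
increases the perfect Roman domination number by exactly 1.  The new vertex is `none`. -/
theorem stmt4 {V : Type*} [Fintype V] [DecidableEq V] (T : SimpleGraph V)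
    (hT : T.IsTree) (hstab : Stable T) (u : V) (hu : u ∈ Wset T)
    (T' : SimpleGraph (Option V))
    (hadj : ∀ a b : Option V, T'.Adj a b ↔
      ((∃ x y : V, a = some x ∧ b = some y ∧ T.Adj x y) ∨
       (a = some u ∧ b = none) ∨ (a = none ∧ b = some u))) :
    prdn T' = prdn T + 1 := by
  classical
  have hne : {w | ∃ f : V → ℕ, IsPRDF T f ∧ ∑ v, f v = w}.Nonempty :=
    ⟨∑ _v : V, 1, fun _ => 1, ⟨fun _ => one_le_two, fun x h => absurd h one_ne_zero⟩, rfl⟩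
  have hne' : {w | ∃ f : Option V → ℕ, IsPRDF T' f ∧ ∑ v, f v = w}.Nonempty :=
    ⟨∑ _v : Option V, 1, fun _ => 1, ⟨fun _ => one_le_two, fun x h => absurd h one_ne_zero⟩, rfl⟩
  -- adjacency facts
  have hssn : ∀ x y : V, T'.Adj (some x) (some y) ↔ T.Adj x y := by
    intro x y; rw [hadj]; simp
  have hsn : ∀ x : V, T'.Adj (some x) none ↔ x = u := by
    intro x; rw [hadj]; simp
  have hns : ∀ b, T'.Adj none b ↔ b = some u := by
    intro b; rw [hadj]; simp
  -- upper bound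
  obtain ⟨f, hf, hfs⟩ : ∃ f : V → ℕ, IsPRDF T f ∧ ∑ v, f v = prdn T := Nat.sInf_mem hne
  have hu0 : f u = 0 := hu f hf hfs
  set g : Option V → ℕ := fun o => o.elim 1 f with hgdef
  have gnone : g none = 1 := rfl
  have gsome : ∀ x, g (some x) = f x := fun _ => rfl
  have hub : prdn T' ≤ prdn T + 1 := by
    refine Nat.sInf_le ⟨g, ⟨?_, ?_⟩, ?_⟩
    · rintro (_|x)
      · exact one_le_two
      · exact hf.1 x
    · rintro (_|x) ha
      · rw [gnone] at ha; exact absurd ha one_ne_zero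
      · rw [gsome] at ha
        obtain ⟨y, ⟨hxy, hy2⟩, hyu⟩ := hf.2 x ha
        refine ⟨some y, ⟨(hssn x y).2 hxy, by rw [gsome]; exact hy2⟩, ?_⟩
        rintro (_|z) ⟨hz, hz2⟩
        · rw [gnone] at hz2; exact absurd hz2 (by omega)
        · rw [gsome] at hz2
          exact congrArg some (hyu z ⟨(hssn x z).1 hz, hz2⟩)
    · rw [Fintype.sum_option, gnone]
      have : ∑ i, g (some i) = ∑ i, f i := Finset.sum_congr rfl fun i _ => gsome i
      rw [this, hfs]; omega
  -- lower bound
  obtain ⟨G, hG, hGs⟩ : ∃ f : Option V → ℕ, IsPRDF T' f ∧ ∑ v, f v = prdn T' :=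
    Nat.sInf_mem hne'
  set f0 : V → ℕ := fun x => G (some x) with hf0def
  have hsum0 : prdn T' = G none + ∑ x, f0 x := by rw [← hGs, Fintype.sum_option]
  have hlb : prdn T + 1 ≤ prdn T' := by
    have hb := hG.1 none
    have h012 : G none = 0 ∨ G none = 1 ∨ G none = 2 := by omega
    rcases h012 with h0 | h1 | h2
    · -- restriction is a PRDF of T with the same weight, and f0 u = 2
      have hu2 : f0 u = 2 := by
        obtain ⟨v', ⟨hav, hv2⟩, _⟩ := hG.2 none h0
        have : v' = some u := (hns v').1 hav
        rw [this] at hv2; exact hv2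
      have hf0 : IsPRDF T f0 := by
        refine ⟨fun x => hG.1 (some x), ?_⟩
        intro x hx
        obtain ⟨v', ⟨hav, hv2⟩, hvu⟩ := hG.2 (some x) hx
        obtain (_|y) := v'
        · rw [h0] at hv2; exact absurd hv2 (by omega)
        · refine ⟨y, ⟨(hssn x y).1 hav, hv2⟩, ?_⟩
          intro z ⟨hz, hz2⟩
          have := hvu (some z) ⟨(hssn x z).2 hz, hz2⟩
          injection this
      have hle : prdn T ≤ ∑ x, f0 x := Nat.sInf_le ⟨f0, hf0, rfl⟩
      by_contra hc
      have heq : ∑ x, f0 x = prdn T := by omega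
      have := hu f0 hf0 heq
      omega
    · -- restriction is a PRDF of T of weight prdn T' - 1
      have hf0 : IsPRDF T f0 := by
        refine ⟨fun x => hG.1 (some x), ?_⟩
        intro x hx
        obtain ⟨v', ⟨hav, hv2⟩, hvu⟩ := hG.2 (some x) hx
        obtain (_|y) := v'
        · rw [h1] at hv2; exact absurd hv2 (by omega)
        · refine ⟨y, ⟨(hssn x y).1 hav, hv2⟩, ?_⟩
          intro z ⟨hz, hz2⟩
          have := hvu (some z) ⟨(hssn x z).2 hz, hz2⟩
          injection this
      have hle : prdn T ≤ ∑ x, f0 x := Nat.sInf_le ⟨f0, hf0, rfl⟩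
      omega
    · by_cases h0u : f0 u = 0
      · -- replace value at u by 1
        set f1 : V → ℕ := Function.update f0 u 1 with hf1def
        have f1u : f1 u = 1 := Function.update_self u 1 f0
        have f1ne : ∀ x, x ≠ u → f1 x = f0 x := fun x hx => Function.update_of_ne hx 1 f0
        have hf1 : IsPRDF T f1 := by
          constructor
          · intro x
            by_cases hxu : x = u
            · rw [hxu, f1u]; omega
            · rw [f1ne x hxu]; exact hG.1 (some x)
          · intro x hx
            have hxu : x ≠ u := fun h => by rw [h, f1u] at hx; omega
            rw [f1ne x hxu] at hx
            obtain ⟨v', ⟨hav, hv2⟩, hvu⟩ := hG.2 (some x) hx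
            obtain (_|y) := v'
            · exact absurd ((hsn x).1 hav) hxu
            · have hyu : y ≠ u := fun h => by rw [h] at hv2; exact absurd hv2 (by rw [show G (some u) = 0 from h0u]; omega)
              refine ⟨y, ⟨(hssn x y).1 hav, by rw [f1ne y hyu]; exact hv2⟩, ?_⟩
              intro z ⟨hz, hz2⟩
              have hzu : z ≠ u := fun h => by rw [h, f1u] at hz2; omega
              rw [f1ne z hzu] at hz2
              have := hvu (some z) ⟨(hssn x z).2 hz, hz2⟩
              injection this
        have hsum1 : ∑ x, f1 x = (∑ x, f0 x) + 1 := by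
          have A := Finset.add_sum_erase Finset.univ f0 (Finset.mem_univ u)
          have B := Finset.add_sum_erase Finset.univ f1 (Finset.mem_univ u)
          have C : ∑ x ∈ Finset.univ.erase u, f1 x = ∑ x ∈ Finset.univ.erase u, f0 x :=
            Finset.sum_congr rfl fun x hx => f1ne x (Finset.ne_of_mem_erase hx)
          rw [← A, ← B, C, f1u, show f0 u = 0 from h0u]; omega
        have hle : prdn T ≤ ∑ x, f1 x := Nat.sInf_le ⟨f1, hf1, rfl⟩
        omega
      · -- restriction works directly
        have hf0 : IsPRDF T f0 := by
          refine ⟨fun x => hG.1 (some x), ?_⟩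
          intro x hx
          have hxu : x ≠ u := fun h => h0u (h ▸ hx)
          obtain ⟨v', ⟨hav, hv2⟩, hvu⟩ := hG.2 (some x) hx
          obtain (_|y) := v'
          · exact absurd ((hsn x).1 hav) hxu
          · refine ⟨y, ⟨(hssn x y).1 hav, hv2⟩, ?_⟩
            intro z ⟨hz, hz2⟩
            have := hvu (some z) ⟨(hssn x z).2 hz, hz2⟩
            injection this
        have hle : prdn T ≤ ∑ x, f0 x := Nat.sInf_le ⟨f0, hf0, rfl⟩
        omega
  omega
end

section
/- Let T be a perfect Roman domination stable tree and let u ∈ W(T). If T' is the tree obtained from T by adding two new vertices v_1, v_2, the edge v_2v_1, and the edge uv_2, then γ_R^p(T') = γ_R^p(T) + 2. -/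
open SimpleGraph

/-
Extending a minimum PRDF of T by 1 on the two new vertices gives a PRDF of T', so
γ(T') ≤ γ(T) + 2.

Conversely let g be a minimum PRDF of T'. If g(u) ≠ 0, the 2-neighbour of every 0-vertex of T
lies in T (only u sees the new vertices), so g restricts to a PRDF of T that is nonzero at u.
Since u ∈ W(T), no such PRDF is minimal, hence the restriction weighs at least γ(T) + 1, and
the pendant path carries weight at least 1 (v₁ = 0 forces v₂ = 2). If g(u) = 0, raise it to 1:
this is still a PRDF, the same argument applies, and now the path carries weight at least 2,
because v₂ cannot take its 2 from u.
-/

open Function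

section PRDF

variable {V : Type*}

lemma exists_isPRDF_sum_eq_prdn [Fintype V] (G : SimpleGraph V) :
    ∃ f : V → ℕ, IsPRDF G f ∧ ∑ v, f v = prdn G :=
  Nat.sInf_mem (s := {w | ∃ f : V → ℕ, IsPRDF G f ∧ ∑ v, f v = w})
    ⟨_, fun _ => 1, ⟨fun _ => one_le_two, fun _ h => absurd h one_ne_zero⟩, rfl⟩

lemma prdn_le_sum [Fintype V] {G : SimpleGraph V} {f : V → ℕ} (hf : IsPRDF G f) :
    prdn G ≤ ∑ v, f v :=
  Nat.sInf_le ⟨f, hf, rfl⟩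

lemma prdn_lt_sum_of_mem_Wset [Fintype V] {G : SimpleGraph V} {u : V} (hu : u ∈ Wset G)
    {f : V → ℕ} (hf : IsPRDF G f) (hfu : f u ≠ 0) : prdn G < ∑ v, f v :=
  (prdn_le_sum hf).lt_of_ne fun h => hfu (hu f hf h.symm)

lemma sum_update_of_eq_zero {M : Type*} [AddCommMonoid M] [Fintype V] [DecidableEq V]
    {f : V → M} {u : V} (hu : f u = 0) (b : M) : ∑ v, update f u b v = ∑ v, f v + b := by
  rw [Finset.sum_update_of_mem (Finset.mem_univ u), ← Finset.add_sum_erase _ _ (Finset.mem_univ u),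
    hu, zero_add, add_comm, Finset.sdiff_singleton_eq_erase]

namespace IsPRDF

variable {G : SimpleGraph V} {f : V → ℕ}

lemma update_one [DecidableEq V] (hf : IsPRDF G f) {u : V} (hfu : f u ≠ 2) :
    IsPRDF G (update f u 1) := by
  have hval : ∀ v, update f u 1 v = 2 ↔ f v = 2 := fun v => by
    rcases eq_or_ne v u with rfl | hv <;> simp_all
  refine ⟨fun v => ?_, fun x hx => ?_⟩
  · rcases eq_or_ne v u with rfl | hv
    · simp
    · simpa [hv] using hf.1 v
  · have hxu : x ≠ u := by rintro rfl; simp at hx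
    simpa only [hval] using hf.2 x (by simpa [hxu] using hx)

lemma one_le_add_of_pendant (hf : IsPRDF G f) {a b : V} (ha : ∀ w, G.Adj a w → w = b) :
    1 ≤ f a + f b := by
  by_contra! h
  obtain ⟨w, ⟨haw, hw⟩, -⟩ := hf.2 a (by omega)
  rw [ha w haw] at hw
  omega

lemma two_le_add_of_pendant (hf : IsPRDF G f) {a b c : V} (ha : ∀ w, G.Adj a w → w = b)
    (hb : ∀ w, G.Adj b w → w = a ∨ w = c) (hc : f c ≠ 2) : 2 ≤ f a + f b := by
  by_contra! h
  have hfa : f a ≠ 0 := fun h0 => by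
    obtain ⟨w, ⟨haw, hw⟩, -⟩ := hf.2 a h0
    rw [ha w haw] at hw
    omega
  obtain ⟨w, ⟨hbw, hw⟩, -⟩ := hf.2 b (by omega)
  rcases hb w hbw with rfl | rfl <;> omega

variable {W : Type*} {G' : SimpleGraph (V ⊕ W)}

lemma sumElim_one (hf : IsPRDF G f) (hG : ∀ x y, G'.Adj (.inl x) (.inl y) ↔ G.Adj x y) :
    IsPRDF G' (Sum.elim f fun _ => 1) := by
  refine ⟨fun v => ?_, fun v hv => ?_⟩
  · cases v <;> simp [hf.1]
  · obtain x | w := v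
    · obtain ⟨z, ⟨hxz, hz⟩, huniq⟩ := hf.2 x hv
      refine ⟨.inl z, ⟨(hG x z).2 hxz, hz⟩, ?_⟩
      rintro (y | w) ⟨hxy, hy⟩
      · exact congrArg Sum.inl (huniq y ⟨(hG x y).1 hxy, hy⟩)
      · simp at hy
    · simp at hv

lemma comp_inl {g : V ⊕ W → ℕ} (hg : IsPRDF G' g)
    (hG : ∀ x y, G'.Adj (.inl x) (.inl y) ↔ G.Adj x y) {u : V}
    (hcut : ∀ x w, G'.Adj (.inl x) (.inr w) → x = u) (hu : g (.inl u) ≠ 0) :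
    IsPRDF G (g ∘ Sum.inl) := by
  refine ⟨fun x => hg.1 _, fun x hx => ?_⟩
  obtain ⟨v, ⟨hxv, hv⟩, huniq⟩ := hg.2 (.inl x) hx
  obtain z | w := v
  · refine ⟨z, ⟨(hG x z).1 hxv, hv⟩, fun y ⟨hxy, hy⟩ => ?_⟩
    exact Sum.inl_injective (huniq (.inl y) ⟨(hG x y).2 hxy, hy⟩)
  · obtain rfl := hcut x w hxv
    exact absurd hx hu

end IsPRDF

end PRDF

theorem stmt5_general {V : Type*} [Fintype V] (T : SimpleGraph V)
    (u : V) (hu : u ∈ Wset T)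
    (T' : SimpleGraph (V ⊕ Fin 2))
    (hadj : ∀ a b : V ⊕ Fin 2, T'.Adj a b ↔
      ((∃ x y : V, a = Sum.inl x ∧ b = Sum.inl y ∧ T.Adj x y) ∨
       (a = Sum.inl u ∧ b = Sum.inr 1) ∨ (a = Sum.inr 1 ∧ b = Sum.inl u) ∨
       (a = Sum.inr 1 ∧ b = Sum.inr 0) ∨ (a = Sum.inr 0 ∧ b = Sum.inr 1))) :
    prdn T' = prdn T + 2 := by
  classical
  have hinl : ∀ x y, T'.Adj (.inl x) (.inl y) ↔ T.Adj x y := by simp [hadj]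
  have hcut : ∀ x i, T'.Adj (.inl x) (.inr i) → x = u := by simp [hadj]
  have hv₁ : ∀ w, T'.Adj (.inr 0) w → w = .inr 1 := by simp [hadj]
  have hv₂ : ∀ w, T'.Adj (.inr 1) w → w = .inr 0 ∨ w = .inl u := by simp [hadj]
  have hsplit : ∀ g : V ⊕ Fin 2 → ℕ, ∑ v, g v = ∑ x, g (.inl x) + (g (.inr 0) + g (.inr 1)) :=
    fun g => by rw [Fintype.sum_sum_type, Fin.sum_univ_two]
  have hweight : ∀ g, IsPRDF T' g → g (.inl u) ≠ 0 →
      prdn T + 1 + (g (.inr 0) + g (.inr 1)) ≤ ∑ v, g v := fun g hg hgu => by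
    have := prdn_lt_sum_of_mem_Wset hu (hg.comp_inl hinl hcut hgu) hgu
    rw [hsplit]
    simp only [comp_apply] at this
    omega
  refine le_antisymm ?_ ?_
  · obtain ⟨f, hf, hfw⟩ := exists_isPRDF_sum_eq_prdn T
    simpa [hsplit, hfw] using prdn_le_sum (hf.sumElim_one hinl)
  · obtain ⟨g, hg, hgw⟩ := exists_isPRDF_sum_eq_prdn T'
    rw [← hgw]
    by_cases hgu : g (.inl u) = 0
    · have hg' := hg.update_one (u := .inl u) (by omega)
      have h₁ := hweight _ hg' (by simp)
      have h₂ := hg.two_le_add_of_pendant hv₁ hv₂ (by omega)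
      have h₃ := sum_update_of_eq_zero hgu 1
      simp only [update_of_ne Sum.inr_ne_inl] at h₁
      omega
    · linarith [hweight g hg hgu, hg.one_le_add_of_pendant hv₁]

/-- attaching a pendant path `u - v₂ - v₁` (v₁ = inr 0, v₂ = inr 1)
at a vertex of `W(T)` of a stable tree increases the perfect Roman domination
number by exactly 2. -/
theorem stmt5 {V : Type*} [Fintype V] [DecidableEq V] (T : SimpleGraph V)
    (hT : T.IsTree) (hstab : Stable T) (u : V) (hu : u ∈ Wset T)
    (T' : SimpleGraph (V ⊕ Fin 2))
    (hadj : ∀ a b : V ⊕ Fin 2, T'.Adj a b ↔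
      ((∃ x y : V, a = Sum.inl x ∧ b = Sum.inl y ∧ T.Adj x y) ∨
       (a = Sum.inl u ∧ b = Sum.inr 1) ∨ (a = Sum.inr 1 ∧ b = Sum.inl u) ∨
       (a = Sum.inr 1 ∧ b = Sum.inr 0) ∨ (a = Sum.inr 0 ∧ b = Sum.inr 1))) :
    prdn T' = prdn T + 2 :=
  stmt5_general T u hu T' hadj
end

section
/- Let T be a perfect Roman domination stable tree of order n ≥ 3 with diameter at least 4, and let P = x_1x_2⋯x_k be a longest path of T. Then x_2 has at most 2 leaf neighbors in T. -/
open SimpleGraph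

open scoped Classical

section Aux
variable {V : Type*}

/-- weight of `f` restricted to `A` -/
noncomputable def wtA [Fintype V] (A : Set V) (f : V → ℕ) : ℕ :=
  ∑ v, if v ∈ A then f v else 0

/-- PRDF relative to a vertex subset -/
def PRDFOn (G : SimpleGraph V) (A : Set V) (f : V → ℕ) : Prop :=
  (∀ v ∈ A, f v ≤ 2) ∧ ∀ u ∈ A, f u = 0 → ∃! v, v ∈ A ∧ G.Adj u v ∧ f v = 2

noncomputable def prdnOn [Fintype V] (G : SimpleGraph V) (A : Set V) : ℕ :=
  sInf {w | ∃ f, PRDFOn G A f ∧ wtA A f = w}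

/-- PRDF on `A` where the root `r` is exempt: if `f r = 0` then `r` has *no*
2-neighbor inside `A` (it will be dominated from outside). -/
def ExemptOn (G : SimpleGraph V) (A : Set V) (r : V) (f : V → ℕ) : Prop :=
  (∀ v ∈ A, f v ≤ 2) ∧
  (∀ u ∈ A, u ≠ r → f u = 0 → ∃! v, v ∈ A ∧ G.Adj u v ∧ f v = 2) ∧
  (f r = 0 → ∀ v ∈ A, G.Adj r v → f v ≠ 2)

noncomputable def hOn [Fintype V] (G : SimpleGraph V) (A : Set V) (r : V) : ℕ :=
  sInf {w | ∃ f, ExemptOn G A r f ∧ wtA A f = w}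

lemma PRDFOn_one (G : SimpleGraph V) (A : Set V) : PRDFOn G A (fun _ => 1) := by
  refine ⟨fun v _ => one_le_two, fun u _ h => by simp at h⟩

lemma ExemptOn_one (G : SimpleGraph V) (A : Set V) (r : V) :
    ExemptOn G A r (fun _ => 1) := by
  refine ⟨fun v _ => one_le_two, fun u _ _ h => by simp at h, fun h => by simp at h⟩

variable [Fintype V]

lemma prdnOn_exists (G : SimpleGraph V) (A : Set V) :
    ∃ f, PRDFOn G A f ∧ wtA A f = prdnOn G A := by
  have h : {w | ∃ f, PRDFOn G A f ∧ wtA A f = w}.Nonempty :=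
    ⟨_, ⟨_, PRDFOn_one G A, rfl⟩⟩
  exact Nat.sInf_mem h

lemma hOn_exists (G : SimpleGraph V) (A : Set V) (r : V) :
    ∃ f, ExemptOn G A r f ∧ wtA A f = hOn G A r := by
  have h : {w | ∃ f, ExemptOn G A r f ∧ wtA A f = w}.Nonempty :=
    ⟨_, ⟨_, ExemptOn_one G A r, rfl⟩⟩
  exact Nat.sInf_mem h

lemma prdnOn_le (G : SimpleGraph V) (A : Set V) {f : V → ℕ} (hf : PRDFOn G A f) :
    prdnOn G A ≤ wtA A f := Nat.sInf_le ⟨f, hf, rfl⟩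

lemma hOn_le (G : SimpleGraph V) (A : Set V) (r : V) {f : V → ℕ} (hf : ExemptOn G A r f) :
    hOn G A r ≤ wtA A f := Nat.sInf_le ⟨f, hf, rfl⟩

lemma wtA_congr (A : Set V) {f g : V → ℕ} (h : ∀ v ∈ A, f v = g v) :
    wtA A f = wtA A g := by
  unfold wtA
  refine Finset.sum_congr rfl fun v _ => ?_
  by_cases hv : v ∈ A
  · simp only [if_pos hv]; exact h v hv
  · simp [hv]

lemma wtA_union (A B : Set V) (hd : Disjoint A B) (f : V → ℕ) :
    wtA (A ∪ B) f = wtA A f + wtA B f := by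
  unfold wtA
  rw [← Finset.sum_add_distrib]
  refine Finset.sum_congr rfl fun v _ => ?_
  by_cases hA : v ∈ A
  · have hB : v ∉ B := fun hB => (Set.disjoint_left.mp hd hA) hB
    simp [hA, hB]
  · by_cases hB : v ∈ B <;> simp [hA, hB]

lemma wtA_single_le (A : Set V) (f : V → ℕ) {u : V} (hu : u ∈ A) :
    f u ≤ wtA A f := by
  unfold wtA
  have := Finset.single_le_sum (f := fun v => if v ∈ A then f v else 0)
    (fun i _ => Nat.zero_le _) (Finset.mem_univ u)
  simpa [hu] using this

lemma wtA_pair_le (A : Set V) (f : V → ℕ) {u v : V} (hu : u ∈ A) (hv : v ∈ A)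
    (huv : u ≠ v) : f u + f v ≤ wtA A f := by
  unfold wtA
  classical
  have h2 : ∑ w ∈ ({u, v} : Finset V), (if w ∈ A then f w else 0) ≤
      ∑ w, if w ∈ A then f w else 0 :=
    Finset.sum_le_sum_of_subset (Finset.subset_univ _)
  rw [Finset.sum_pair huv] at h2
  simpa [hu, hv] using h2

lemma wtA_const_one (A : Set V) : wtA A (fun _ => 1) = A.ncard := by
  unfold wtA
  rw [Finset.sum_ite, Finset.sum_const, Finset.sum_const]
  simp only [smul_eq_mul, mul_one, mul_zero, add_zero]
  rw [Set.ncard_eq_toFinset_card']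
  congr 1
  ext v
  simp

lemma wtA_ncard_le (A : Set V) (f : V → ℕ) (h : ∀ v ∈ A, 1 ≤ f v) :
    A.ncard ≤ wtA A f := by
  rw [← wtA_const_one A]
  unfold wtA
  refine Finset.sum_le_sum fun v _ => ?_
  by_cases hv : v ∈ A <;> simp [hv]
  exact h v hv


section Aux2
variable {V : Type*} [Fintype V] (G : SimpleGraph V)

/-- additivity of `prdnOn` over parts with no cross edges -/
lemma prdnOn_union (A B : Set V) (hd : Disjoint A B)
    (hAB : ∀ a ∈ A, ∀ b ∈ B, ¬G.Adj a b) :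
    prdnOn G (A ∪ B) = prdnOn G A + prdnOn G B := by
  apply le_antisymm
  · obtain ⟨f, hf, hwf⟩ := prdnOn_exists G A
    obtain ⟨g, hg, hwg⟩ := prdnOn_exists G B
    set F : V → ℕ := fun v => if v ∈ A then f v else g v with hF
    have hFA : ∀ v ∈ A, F v = f v := fun v hv => by simp [hF, hv]
    have hFB : ∀ v ∈ B, F v = g v := fun v hv => by
      have : v ∉ A := fun h => Set.disjoint_left.mp hd h hv
      simp [hF, this]
    have hPR : PRDFOn G (A ∪ B) F := by
      constructor
      · rintro v (hv | hv)
        · rw [hFA v hv]; exact hf.1 v hv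
        · rw [hFB v hv]; exact hg.1 v hv
      · rintro u (hu | hu) hu0
        · rw [hFA u hu] at hu0
          obtain ⟨v, ⟨hvA, hadj, hv2⟩, huniq⟩ := hf.2 u hu hu0
          refine ⟨v, ⟨Or.inl hvA, hadj, by rw [hFA v hvA]; exact hv2⟩, ?_⟩
          rintro v' ⟨hv' | hv', hadj', hv2'⟩
          · exact huniq v' ⟨hv', hadj', by rwa [hFA v' hv'] at hv2'⟩
          · exact absurd hadj' (hAB u hu v' hv')
        · rw [hFB u hu] at hu0
          obtain ⟨v, ⟨hvB, hadj, hv2⟩, huniq⟩ := hg.2 u hu hu0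
          refine ⟨v, ⟨Or.inr hvB, hadj, by rw [hFB v hvB]; exact hv2⟩, ?_⟩
          rintro v' ⟨hv' | hv', hadj', hv2'⟩
          · exact absurd hadj'.symm (hAB v' hv' u hu)
          · exact huniq v' ⟨hv', hadj', by rwa [hFB v' hv'] at hv2'⟩
    have := prdnOn_le G (A ∪ B) hPR
    rw [wtA_union A B hd, wtA_congr A hFA, wtA_congr B hFB, hwf, hwg] at this
    exact this
  · obtain ⟨F, hF, hwF⟩ := prdnOn_exists G (A ∪ B)
    have hA : PRDFOn G A F := by
      constructor
      · exact fun v hv => hF.1 v (Or.inl hv)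
      · intro u hu hu0
        obtain ⟨v, ⟨hvAB, hadj, hv2⟩, huniq⟩ := hF.2 u (Or.inl hu) hu0
        have hvA : v ∈ A := by
          rcases hvAB with h | h
          · exact h
          · exact absurd hadj (hAB u hu v h)
        exact ⟨v, ⟨hvA, hadj, hv2⟩, fun v' ⟨hv', hadj', hv2'⟩ =>
          huniq v' ⟨Or.inl hv', hadj', hv2'⟩⟩
    have hB : PRDFOn G B F := by
      constructor
      · exact fun v hv => hF.1 v (Or.inr hv)
      · intro u hu hu0
        obtain ⟨v, ⟨hvAB, hadj, hv2⟩, huniq⟩ := hF.2 u (Or.inr hu) hu0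
        have hvB : v ∈ B := by
          rcases hvAB with h | h
          · exact absurd hadj.symm (hAB v h u hu)
          · exact h
        exact ⟨v, ⟨hvB, hadj, hv2⟩, fun v' ⟨hv', hadj', hv2'⟩ =>
          huniq v' ⟨Or.inr hv', hadj', hv2'⟩⟩
    calc prdnOn G A + prdnOn G B ≤ wtA A F + wtA B F :=
          Nat.add_le_add (prdnOn_le G A hA) (prdnOn_le G B hB)
      _ = wtA (A ∪ B) F := (wtA_union A B hd F).symm
      _ = prdnOn G (A ∪ B) := hwF

/-- a set with no internal edges has `prdnOn` equal to its cardinality -/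
lemma prdnOn_isolated (A : Set V) (h : ∀ a ∈ A, ∀ b ∈ A, ¬G.Adj a b) :
    prdnOn G A = A.ncard := by
  apply le_antisymm
  · have := prdnOn_le G A (PRDFOn_one G A)
    rwa [wtA_const_one] at this
  · obtain ⟨f, hf, hwf⟩ := prdnOn_exists G A
    rw [← hwf]
    refine wtA_ncard_le A f fun v hv => ?_
    by_contra h1
    push_neg at h1
    interval_cases h0 : f v
    obtain ⟨w, ⟨hwA, hadj, _⟩, _⟩ := hf.2 v hv h0
    exact h v hv w hwA hadj



lemma sum_subtype_eq_wtA (A : Set V) [Fintype ↥A] (F : V → ℕ) :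
    ∑ v : ↥A, F ↑v = wtA A F := by
  unfold wtA
  rw [Finset.sum_ite, Finset.sum_const, smul_zero, add_zero,
    Finset.sum_subtype (p := (· ∈ A)) (Finset.univ.filter (· ∈ A)) (fun x => by simp) F]

lemma prdn_induce (A : Set V) [Fintype ↥A] : prdn (G.induce A) = prdnOn G A := by
  unfold prdn prdnOn
  congr 1
  ext w
  constructor
  · rintro ⟨f, hf, hwf⟩
    set F : V → ℕ := fun v => if h : v ∈ A then f ⟨v, h⟩ else 1 with hFdef
    have hFA : ∀ (v : ↥A), F ↑v = f v := fun v => by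
      simp [hFdef, v.2]
    refine ⟨F, ⟨fun v hv => ?_, fun u hu hu0 => ?_⟩, ?_⟩
    · rw [show F v = f ⟨v, hv⟩ by simp [hFdef, hv]]; exact hf.1 _
    · have : f ⟨u, hu⟩ = 0 := by rw [← hu0]; exact (hFA ⟨u, hu⟩).symm
      obtain ⟨v, ⟨hadj, hv2⟩, huniq⟩ := hf.2 ⟨u, hu⟩ this
      refine ⟨↑v, ⟨v.2, hadj, by rw [hFA v]; exact hv2⟩, ?_⟩
      rintro v' ⟨hv', hadj', hv2'⟩
      have := huniq ⟨v', hv'⟩ ⟨hadj', by rw [← hv2']; exact (hFA ⟨v', hv'⟩).symm⟩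
      exact congrArg Subtype.val this
    · rw [← hwf, ← sum_subtype_eq_wtA]
      exact Finset.sum_congr rfl fun v _ => hFA v
  · rintro ⟨F, hF, hwF⟩
    refine ⟨fun v => F ↑v, ⟨fun v => hF.1 ↑v v.2, fun u hu0 => ?_⟩, ?_⟩
    · obtain ⟨v, ⟨hvA, hadj, hv2⟩, huniq⟩ := hF.2 ↑u u.2 hu0
      refine ⟨⟨v, hvA⟩, ⟨hadj, hv2⟩, ?_⟩
      rintro v' ⟨hadj', hv2'⟩
      exact Subtype.ext (huniq ↑v' ⟨v'.2, hadj', hv2'⟩)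
    · rw [← hwF, ← sum_subtype_eq_wtA]

lemma wtA_singleton (u : V) (f : V → ℕ) : wtA {u} f = f u := by
  classical
  unfold wtA
  simp [Set.mem_singleton_iff, Finset.sum_ite_eq' Finset.univ u f]

lemma wtA_split_single (A : Set V) {u : V} (hu : u ∈ A) (f : V → ℕ) :
    wtA A f = f u + wtA (A \ {u}) f := by
  conv_lhs => rw [← Set.union_diff_cancel (Set.singleton_subset_iff.mpr hu)]
  rw [wtA_union _ _ (by rw [Set.disjoint_left]; rintro v rfl hv; exact hv.2 rfl) f]
  rw [wtA_singleton]

end Aux2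
end Aux

/-- in a stable tree of order ≥ 3 and diameter ≥ 4, the second vertex
of a longest path has at most 2 leaf neighbors. -/
theorem stmt8 {V : Type*} [Fintype V] [DecidableEq V] (T : SimpleGraph V)
    (hT : T.IsTree) (hstab : Stable T) (hn : 3 ≤ Fintype.card V)
    (hdiam : ∃ u w : V, 4 ≤ T.dist u w)
    (x y : V) (p : T.Walk x y) (hp : p.IsPath)
    (hlong : ∀ (a b : V) (q : T.Walk a b), q.IsPath → q.length ≤ p.length) :
    {w : V | T.Adj (p.getVert 1) w ∧ deg T w = 1}.ncard ≤ 2 := by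
    classical
  obtain ⟨u0, w0, hdist⟩ := hdiam
  obtain ⟨q0⟩ : T.Reachable u0 w0 := hT.isConnected u0 w0
  have hlen4 : 4 ≤ p.length := by
    have h1 : T.dist u0 w0 ≤ (q0.toPath : T.Walk u0 w0).length := SimpleGraph.dist_le _
    have h2 := hlong u0 w0 q0.toPath q0.toPath.2
    omega
  clear hdist hn
  revert hlong hp hlen4
  cases p with
  | nil => intro _ _ h4; simp only [Walk.length_nil] at h4; omega
  | cons hadj₁ q =>
    cases q with
    | nil => intro _ _ h4; simp only [Walk.length_cons, Walk.length_nil] at h4; omega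
    | cons hadj₂ q2 =>
      cases q2 with
      | nil => intro _ _ h4; simp only [Walk.length_cons, Walk.length_nil] at h4; omega
      | cons hadj₃ q3 =>
        rename_i c d e
        intro hp hlong _
        -- c = x₂, d = x₃, e = x₄
        set qq : T.Walk c y := Walk.cons hadj₂ (Walk.cons hadj₃ q3) with hqq
        rw [Walk.cons_isPath_iff] at hp
        obtain ⟨hq_path, hxq⟩ := hp
        simp only [Walk.getVert_cons_succ, Walk.getVert_zero]
        have hcd : T.Adj c d := hadj₂
        have hde : T.Adj d e := hadj₃
        have hce : c ≠ e := by
          have h1 : (Walk.cons hadj₃ q3).IsPath ∧ c ∉ (Walk.cons hadj₃ q3).support := by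
            rw [← Walk.cons_isPath_iff]; exact hq_path
          intro h
          apply h1.2
          rw [Walk.support_cons, h]
          exact List.mem_cons_of_mem d q3.start_mem_support
        have hstepA : ∀ y', T.Adj c y' → y' ∈ qq.support → y' = d := by
          intro y' hcy hy'
          have ht : (qq.takeUntil y' hy').IsPath := hq_path.takeUntil hy'
          have he1 : (Walk.cons hcy Walk.nil : T.Walk c y').IsPath := by
            rw [Walk.cons_isPath_iff]
            exact ⟨Walk.IsPath.nil, by simp [hcy.ne]⟩
          have heq : qq.takeUntil y' hy' = Walk.cons hcy Walk.nil :=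
            congrArg Subtype.val (hT.IsAcyclic.path_unique ⟨_, ht⟩ ⟨_, he1⟩)
          have hspec := qq.take_spec hy'
          rw [heq] at hspec
          have hgv := congrArg (fun r => r.getVert 1) hspec
          simpa [hqq, Walk.getVert_cons_succ, Walk.getVert_zero] using hgv
        have hB : ∀ y', T.Adj c y' → y' ≠ d → ∀ z, T.Adj y' z → z = c := by
          intro y' hcy hyd z hyz
          by_contra hzc
          have hynot : y' ∉ qq.support := fun h => hyd (hstepA y' hcy h)
          have hznot : z ∉ qq.support := by
            intro hz
            have ht : (qq.takeUntil z hz).IsPath := hq_path.takeUntil hz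
            have hw1 : (Walk.cons hyz (qq.takeUntil z hz).reverse : T.Walk y' c).IsPath := by
              rw [Walk.cons_isPath_iff]
              refine ⟨ht.reverse, ?_⟩
              rw [Walk.support_reverse, List.mem_reverse]
              exact fun h => hynot (qq.support_takeUntil_subset hz h)
            have he2 : (Walk.cons hcy.symm Walk.nil : T.Walk y' c).IsPath := by
              rw [Walk.cons_isPath_iff]
              exact ⟨Walk.IsPath.nil, by simp [hcy.ne']⟩
            have heq : Walk.cons hyz (qq.takeUntil z hz).reverse =
                Walk.cons hcy.symm Walk.nil :=
              congrArg Subtype.val (hT.IsAcyclic.path_unique ⟨_, hw1⟩ ⟨_, he2⟩)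
            have hlen := congrArg Walk.length heq
            simp only [Walk.length_cons, Walk.length_reverse, Walk.length_nil] at hlen
            have : c = z := Walk.eq_of_length_eq_zero (p := qq.takeUntil z hz) (by omega)
            exact hzc this.symm
          have hW : (Walk.cons hyz.symm (Walk.cons hcy.symm qq) : T.Walk z y).IsPath := by
            rw [Walk.cons_isPath_iff, Walk.cons_isPath_iff]
            refine ⟨⟨hq_path, hynot⟩, ?_⟩
            rw [Walk.support_cons]
            simp only [List.mem_cons]
            push_neg
            exact ⟨hyz.ne', hznot⟩
          have hWlen := hlong z y _ hW
          simp only [Walk.length_cons] at hWlen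
          omega
        set L : Set V := {w | T.Adj c w ∧ deg T w = 1} with hL
        have hmemL : ∀ v, v ∈ L ↔ (T.Adj c v ∧ deg T v = 1) := fun v => by
          rw [hL]; exact Iff.rfl
        by_contra hcon
        push_neg at hcon
        have hm3 : 3 ≤ L.ncard := hcon
        have hLsub : ∀ l ∈ L, ∀ z, T.Adj l z → z = c := by
          intro l hl z hlz
          obtain ⟨hadj, hdeg⟩ := (hmemL l).mp hl
          have hdeg' : (T.neighborSet l).ncard = 1 := hdeg
          obtain ⟨a, ha⟩ := Set.ncard_eq_one.mp hdeg'
          have hc : c ∈ T.neighborSet l := hadj.symm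
          have hz : z ∈ T.neighborSet l := hlz
          rw [ha, Set.mem_singleton_iff] at hc hz
          rw [hz, hc]
        have hcL : c ∉ L := fun h => T.irrefl ((hmemL c).mp h).1
        have hdL : d ∉ L := by
          intro h
          exact hce (hLsub d h e hde).symm
        have hnbr : ∀ v, T.Adj c v → v = d ∨ v ∈ L := by
          intro v hv
          by_cases hvd : v = d
          · exact Or.inl hvd
          · refine Or.inr ((hmemL v).mpr ⟨hv, ?_⟩)
            show (T.neighborSet v).ncard = 1
            have hns : T.neighborSet v = {c} := by
              ext z
              simp only [mem_neighborSet, Set.mem_singleton_iff]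
              exact ⟨fun hz => hB v hv hvd z hz, fun hz => hz ▸ hv.symm⟩
            rw [hns, Set.ncard_singleton]
        set S : Set V := {v | v ≠ c ∧ v ∉ L} with hS
        have hmemS : ∀ v, v ∈ S ↔ (v ≠ c ∧ v ∉ L) := fun v => by
          rw [hS]; exact Iff.rfl
        have hdS : d ∈ S := (hmemS d).mpr ⟨hcd.ne', hdL⟩
        have hSL : ∀ s ∈ S, ∀ l ∈ L, ¬T.Adj s l := by
          intro s hs l hl hadj
          exact ((hmemS s).mp hs).1 (hLsub l hl s hadj.symm)
        have hcS : ∀ s ∈ S, s ≠ d → ¬T.Adj c s := by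
          intro s hs hsd hadj
          rcases hnbr s hadj with h | h
          · exact hsd h
          · exact ((hmemS s).mp hs).2 h
        -- minimum functions
        obtain ⟨F0, hF0, hwF0⟩ := hOn_exists T S d
        obtain ⟨g, hg, hwg⟩ := prdnOn_exists T S
        -- (1) stability at c
        have h1 : prdnOn T {u | u ≠ c} = prdn T := by
          rw [← prdn_induce]; exact hstab c
        have hsplit1 : {u : V | u ≠ c} = L ∪ S := by
          ext u
          simp only [Set.mem_setOf_eq, Set.mem_union]
          constructor
          · intro h
            by_cases hu : u ∈ L
            · exact Or.inl hu
            · exact Or.inr ((hmemS u).mpr ⟨h, hu⟩)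
          · rintro (h | h)
            · exact fun hc => hcL (hc ▸ h)
            · exact ((hmemS u).mp h).1
        have hLiso : prdnOn T L = L.ncard := by
          apply prdnOn_isolated
          intro a ha b hb hab
          exact hcL ((hLsub a ha b hab) ▸ hb)
        have hdisj1 : Disjoint L S := by
          rw [Set.disjoint_left]
          intro a ha h2
          exact ((hmemS a).mp h2).2 ha
        have hP1 : prdn T = L.ncard + prdnOn T S := by
          rw [← h1, hsplit1,
            prdnOn_union T L S hdisj1 (fun a ha b hb hab => hSL b hb a ha hab.symm), hLiso]
        -- (2) prdn T ≤ 2 + hOn T S d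
        have hP2 : prdn T ≤ 2 + hOn T S d := by
          set f : V → ℕ := fun v => if v = c then 2 else if v ∈ L then 0 else F0 v with hf
          have hfc : f c = 2 := by simp [hf]
          have hfL : ∀ v ∈ L, f v = 0 := by
            intro v hv
            have hvc : v ≠ c := fun h => hcL (h ▸ hv)
            simp [hf, hvc, hv]
          have hfS : ∀ v ∈ S, f v = F0 v := by
            intro v hv
            obtain ⟨h1', h2'⟩ := (hmemS v).mp hv
            simp [hf, h1', h2']
          have husplit : (Set.univ : Set V) = ({c} ∪ L) ∪ S := by
            ext u
            simp only [Set.mem_univ, true_iff, Set.mem_union, Set.mem_singleton_iff]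
            by_cases h1' : u = c
            · exact Or.inl (Or.inl h1')
            · by_cases h2' : u ∈ L
              · exact Or.inl (Or.inr h2')
              · exact Or.inr ((hmemS u).mpr ⟨h1', h2'⟩)
          have hPR : IsPRDF T f := by
            constructor
            · intro v
              by_cases h1' : v = c
              · simp [hf, h1']
              · by_cases h2' : v ∈ L
                · simp [hf, h1', h2']
                · have hvS : v ∈ S := (hmemS v).mpr ⟨h1', h2'⟩
                  rw [hfS v hvS]
                  exact hF0.1 v hvS
            · intro u hu0
              by_cases h1' : u = c
              · rw [h1', hfc] at hu0
                exact absurd hu0 (by norm_num)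
              · by_cases h2' : u ∈ L
                · refine ⟨c, ⟨(((hmemL u).mp h2').1).symm, hfc⟩, ?_⟩
                  rintro v ⟨hadj, hv2⟩
                  exact hLsub u h2' v hadj
                · have huS : u ∈ S := (hmemS u).mpr ⟨h1', h2'⟩
                  by_cases h3' : u = d
                  · subst h3'
                    refine ⟨c, ⟨hcd.symm, hfc⟩, ?_⟩
                    rintro v ⟨hadj, hv2⟩
                    by_contra hvc
                    have hvL : v ∉ L := fun hvl => by
                      rw [hfL v hvl] at hv2; exact absurd hv2 (by norm_num)
                    have hvS : v ∈ S := (hmemS v).mpr ⟨hvc, hvL⟩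
                    rw [hfS v hvS] at hv2
                    have hF0u : F0 u = 0 := by rw [← hfS u huS]; exact hu0
                    exact hF0.2.2 hF0u v hvS hadj hv2
                  · rw [hfS u huS] at hu0
                    obtain ⟨v, ⟨hvS, hadj, hv2⟩, huniq⟩ := hF0.2.1 u huS h3' hu0
                    refine ⟨v, ⟨hadj, by rw [hfS v hvS]; exact hv2⟩, ?_⟩
                    rintro v' ⟨hadj', hv2'⟩
                    have hv'c : v' ≠ c := by
                      intro h
                      subst h
                      rcases hnbr u hadj'.symm with h | h
                      · exact h3' h
                      · exact h2' h
                    have hv'L : v' ∉ L := fun hvl => by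
                      rw [hfL v' hvl] at hv2'; exact absurd hv2' (by norm_num)
                    have hv'S : v' ∈ S := (hmemS v').mpr ⟨hv'c, hv'L⟩
                    exact huniq v' ⟨hv'S, hadj', by rw [← hfS v' hv'S]; exact hv2'⟩
          have hsum : ∑ v, f v = 2 + hOn T S d := by
            have e0 : ∑ v, f v = wtA Set.univ f := by
              unfold wtA; simp
            have hd1 : Disjoint ({c} ∪ L : Set V) S := by
              rw [Set.disjoint_left]
              rintro a (ha | ha) h2
              · exact ((hmemS a).mp h2).1 ha
              · exact ((hmemS a).mp h2).2 ha
            have hd2 : Disjoint ({c} : Set V) L := by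
              rw [Set.disjoint_left]
              intro a ha h2
              rw [Set.mem_singleton_iff] at ha
              exact hcL (ha ▸ h2)
            rw [e0, husplit, wtA_union _ _ hd1, wtA_union _ _ hd2, wtA_singleton, hfc]
            have hz1 : wtA L f = wtA L (fun _ => 0) := wtA_congr L hfL
            have hz2 : wtA L (fun _ => 0) = 0 := by unfold wtA; simp
            have hz3 : wtA S f = wtA S F0 := wtA_congr S hfS
            rw [hz1, hz2, hz3, hwF0]
          exact Nat.sInf_le ⟨f, hPR, hsum⟩
        by_cases hgd : g d = 0
        · -- main branch: g d = 0
          have hex : ExemptOn T S d (Function.update g d 1) := by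
            refine ⟨?_, ?_, ?_⟩
            · intro v hv
              by_cases h : v = d
              · subst h; rw [Function.update_self]; omega
              · rw [Function.update_of_ne h]; exact hg.1 v hv
            · intro u hu hud h0
              rw [Function.update_of_ne hud] at h0
              obtain ⟨v, ⟨hvS, hadj, hv2⟩, huniq⟩ := hg.2 u hu h0
              have hvd : v ≠ d := fun h => by rw [h, hgd] at hv2; exact absurd hv2 (by norm_num)
              refine ⟨v, ⟨hvS, hadj, by rw [Function.update_of_ne hvd]; exact hv2⟩, ?_⟩
              rintro v' ⟨hv'S, hadj', hv2'⟩
              have hv'd : v' ≠ d := fun h => by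
                rw [h, Function.update_self] at hv2'; exact absurd hv2' (by norm_num)
              rw [Function.update_of_ne hv'd] at hv2'
              exact huniq v' ⟨hv'S, hadj', hv2'⟩
            · intro h
              rw [Function.update_self] at h
              exact absurd h (by norm_num)
          have hup : wtA S (Function.update g d 1) = prdnOn T S + 1 := by
            rw [wtA_split_single S hdS, Function.update_self]
            have he1 : wtA (S \ {d}) (Function.update g d 1) = wtA (S \ {d}) g :=
              wtA_congr _ (fun v hv => by
                have hvd : v ≠ d := fun h => hv.2 (by simp [h])
                exact Function.update_of_ne hvd 1 g)
            rw [wtA_split_single S hdS g, hgd] at hwg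
            omega
          have h3 : hOn T S d ≤ prdnOn T S + 1 := by
            rw [← hup]; exact hOn_le T S d hex
          -- (6) stability at d
          have h6 : prdnOn T {u | u ≠ d} = prdn T := by
            rw [← prdn_induce]; exact hstab d
          have hsplit2 : {u : V | u ≠ d} = ({c} ∪ L) ∪ (S \ {d}) := by
            ext u
            simp only [Set.mem_setOf_eq, Set.mem_union, Set.mem_singleton_iff, Set.mem_diff]
            constructor
            · intro h
              by_cases h1' : u = c
              · exact Or.inl (Or.inl h1')
              · by_cases h2' : u ∈ L
                · exact Or.inl (Or.inr h2')
                · exact Or.inr ⟨(hmemS u).mpr ⟨h1', h2'⟩, h⟩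
            · rintro ((h | h) | h)
              · exact h ▸ hcd.ne
              · exact fun hud => hdL (hud ▸ h)
              · exact h.2
          have hLne : L.Nonempty := by
            rcases Set.eq_empty_or_nonempty L with h | h
            · rw [h, Set.ncard_empty] at hm3; omega
            · exact h
          obtain ⟨l0, hl0⟩ := hLne
          have hl0c : l0 ≠ c := fun h => hcL (h ▸ hl0)
          have hstar : prdnOn T ({c} ∪ L) = 2 := by
            apply le_antisymm
            · set f2 : V → ℕ := fun v => if v = c then 2 else 0 with hf2
              have hPR2 : PRDFOn T ({c} ∪ L) f2 := by
                constructor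
                · intro v _
                  by_cases h : v = c <;> simp [hf2, h]
                · intro u hu hu0
                  have huc : u ≠ c := by
                    intro h; rw [h] at hu0; simp [hf2] at hu0
                  have huL : u ∈ L := hu.resolve_left huc
                  refine ⟨c, ⟨Or.inl rfl, (((hmemL u).mp huL).1).symm, by simp [hf2]⟩, ?_⟩
                  rintro v ⟨hv, hadj, hv2⟩
                  exact hLsub u huL v hadj
              have hw2 : wtA ({c} ∪ L) f2 = 2 := by
                rw [wtA_split_single ({c} ∪ L) (Or.inl rfl : c ∈ ({c} ∪ L : Set V)) f2]
                have he1 : wtA (({c} ∪ L) \ {c}) f2 = wtA _ (fun _ => 0) :=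
                  wtA_congr _ (fun v hv => by
                    have : v ≠ c := fun h => hv.2 (h ▸ rfl)
                    simp [hf2, this])
                have he2 : wtA (({c} ∪ L : Set V) \ {c}) (fun _ => 0) = 0 := by
                  unfold wtA; simp
                rw [he1, he2]
                simp [hf2]
              rw [← hw2]
              exact prdnOn_le T _ hPR2
            · obtain ⟨f3, hf3, hwf3⟩ := prdnOn_exists T ({c} ∪ L)
              rw [← hwf3]
              rcases (by omega : f3 c = 0 ∨ f3 c = 1 ∨ 2 ≤ f3 c) with h | h | h
              · obtain ⟨v, ⟨hv, hadj, hv2⟩, _⟩ := hf3.2 c (Or.inl rfl) h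
                have := wtA_single_le ({c} ∪ L) f3 hv
                omega
              · have hl1 : 1 ≤ f3 l0 := by
                  by_contra hcon2
                  push_neg at hcon2
                  have h0 : f3 l0 = 0 := by omega
                  obtain ⟨v, ⟨hv, hadj, hv2⟩, _⟩ := hf3.2 l0 (Or.inr hl0) h0
                  have hvc : v = c := hLsub l0 hl0 v hadj
                  rw [hvc, h] at hv2
                  exact absurd hv2 (by norm_num)
                have := wtA_pair_le ({c} ∪ L) f3 (Or.inl rfl) (Or.inr hl0) (Ne.symm hl0c)
                omega
              · have := wtA_single_le ({c} ∪ L) f3 (Or.inl rfl : c ∈ ({c} ∪ L : Set V))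
                omega
          have hdisj2 : Disjoint ({c} ∪ L : Set V) (S \ {d}) := by
            rw [Set.disjoint_left]
            rintro a (ha | ha) h2
            · exact ((hmemS a).mp h2.1).1 ha
            · exact ((hmemS a).mp h2.1).2 ha
          have hcross2 : ∀ a ∈ ({c} ∪ L : Set V), ∀ b ∈ S \ {d}, ¬T.Adj a b := by
            rintro a (ha | ha) b hb hadj
            · exact hcS b hb.1 (fun h => hb.2 (h ▸ rfl)) (ha ▸ hadj)
            · exact ((hmemS b).mp hb.1).1 (hLsub a ha b hadj)
          have hP6 : prdn T = 2 + prdnOn T (S \ {d}) := by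
            rw [← h6, hsplit2, prdnOn_union T _ _ hdisj2 hcross2, hstar]
          -- (7) restriction
          have hres : PRDFOn T (S \ {d}) g := by
            constructor
            · exact fun v hv => hg.1 v hv.1
            · intro u hu hu0
              obtain ⟨v, ⟨hvS, hadj, hv2⟩, huniq⟩ := hg.2 u hu.1 hu0
              have hvd : v ≠ d := fun h => by
                rw [h, hgd] at hv2; exact absurd hv2 (by norm_num)
              refine ⟨v, ⟨⟨hvS, by simpa using hvd⟩, hadj, hv2⟩, ?_⟩
              rintro v' ⟨hv'S, hadj', hv2'⟩
              exact huniq v' ⟨hv'S.1, hadj', hv2'⟩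
          have hwres : wtA (S \ {d}) g = prdnOn T S := by
            rw [wtA_split_single S hdS g, hgd] at hwg
            omega
          have h7 : prdnOn T (S \ {d}) ≤ prdnOn T S := by
            rw [← hwres]; exact prdnOn_le T _ hres
          omega
        · -- easy branch: g d ≠ 0
          have hex : ExemptOn T S d g :=
            ⟨hg.1, fun u hu _ h0 => hg.2 u hu h0, fun h => absurd h hgd⟩
          have h3 := hOn_le T S d hex
          rw [hwg] at h3
          omega
end

section
/- Let T be a perfect Roman domination stable tree with a path x_1x_2x_3x_4 in T where x_1 is a leaf, d(x_2) = d(x_3) = 2, and let T' = T − {x_1, x_2, x_3}. Then x_4 ∈ W(T'), i.e., every γ_R^p-function f' of T' satisfies f'(x_4) = 0. -/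
open SimpleGraph

lemma isPRDF_one {V : Type*} (G : SimpleGraph V) : IsPRDF G (fun _ => 1) :=
  ⟨fun _ => one_le_two, fun _ h => absurd h one_ne_zero⟩

lemma prdn_le {V : Type*} [Fintype V] (G : SimpleGraph V) (f : V → ℕ) (hf : IsPRDF G f) :
    prdn G ≤ ∑ v, f v :=
  Nat.sInf_le ⟨f, hf, rfl⟩

lemma prdn_exists {V : Type*} [Fintype V] (G : SimpleGraph V) :
    ∃ f : V → ℕ, IsPRDF G f ∧ ∑ v, f v = prdn G :=
  Nat.sInf_mem (s := {w | ∃ f : V → ℕ, IsPRDF G f ∧ ∑ v, f v = w})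
    ⟨_, fun _ => 1, isPRDF_one G, rfl⟩

def extFun {V : Type*} (p : V → Prop) [DecidablePred p] (f : {v // p v} → ℕ) : V → ℕ :=
  fun v => if h : p v then f ⟨v, h⟩ else 0

lemma extFun_pos {V : Type*} {p : V → Prop} [DecidablePred p] (f : {v // p v} → ℕ)
    {v : V} (h : p v) : extFun p f v = f ⟨v, h⟩ := dif_pos h

lemma extFun_neg {V : Type*} {p : V → Prop} [DecidablePred p] (f : {v // p v} → ℕ)
    {v : V} (h : ¬ p v) : extFun p f v = 0 := dif_neg h

lemma sum_extFun {V : Type*} [Fintype V] {p : V → Prop} [DecidablePred p]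
    [Fintype (Subtype p)] (f : Subtype p → ℕ) :
    (∑ v : Subtype p, f v) = ∑ v : V, extFun p f v := by
  classical
  have e1 : (∑ v ∈ Finset.univ.filter p, extFun p f v) = ∑ v : V, extFun p f v :=
    Finset.sum_filter_of_ne (fun x _ hx => by
      by_contra h; exact hx (extFun_neg f h))
  rw [← e1, Finset.sum_subtype (p := p) (Finset.univ.filter p) (fun x => by simp) (extFun p f)]
  exact Finset.sum_congr rfl fun x _ => (extFun_pos f x.2).symm

lemma sum_extFunS {V : Type*} [Fintype V] (S : Set V) [DecidablePred (· ∈ S)]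
    [Fintype ↥S] (f : ↥S → ℕ) :
    (∑ v : ↥S, f v) = ∑ v : V, extFun (· ∈ S) f v := sum_extFun f

/-- removing a pendant path x₁x₂x₃ (x₁ a leaf, d(x₂)=d(x₃)=2) from a
stable tree leaves x₄ in W(T'). -/
theorem stmt10 {V : Type*} [Fintype V] [DecidableEq V] (T : SimpleGraph V)
    (hT : T.IsTree) (hstab : Stable T)
    (x1 x2 x3 x4 : V) (h12 : T.Adj x1 x2) (h23 : T.Adj x2 x3) (h34 : T.Adj x3 x4)
    (h13 : x1 ≠ x3) (h24 : x2 ≠ x4) (h14 : x1 ≠ x4)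
    (hx1 : deg T x1 = 1) (hx2 : deg T x2 = 2) (hx3 : deg T x3 = 2) :
    (⟨x4, Ne.symm h14, Ne.symm h24, h34.ne'⟩ :
        {u : V // u ≠ x1 ∧ u ≠ x2 ∧ u ≠ x3}) ∈
      Wset (T.induce {u : V | u ≠ x1 ∧ u ≠ x2 ∧ u ≠ x3}) := by
  classical
  have n12 : x1 ≠ x2 := h12.ne
  have n23 : x2 ≠ x3 := h23.ne
  have n34 : x3 ≠ x4 := h34.ne
  have hx4m : x4 ≠ x1 ∧ x4 ≠ x2 ∧ x4 ≠ x3 := ⟨Ne.symm h14, Ne.symm h24, h34.ne'⟩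
  have hx1' : (T.neighborSet x1).ncard = 1 := hx1
  have hx2' : (T.neighborSet x2).ncard = 2 := hx2
  have hx3' : (T.neighborSet x3).ncard = 2 := hx3
  -- neighborhood characterizations
  have hN1 : ∀ u, T.Adj x1 u → u = x2 := by
    obtain ⟨a, ha⟩ := Set.ncard_eq_one.mp hx1'
    have h2a : x2 = a := by
      have hm : x2 ∈ T.neighborSet x1 := h12
      rw [ha] at hm; exact hm
    intro u hu
    have hm : u ∈ T.neighborSet x1 := hu
    rw [ha] at hm
    exact hm.trans h2a.symm
  have key2 : ∀ (s : Set V) (y z : V), s.ncard = 2 → y ∈ s → z ∈ s → y ≠ z →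
      ∀ u ∈ s, u = y ∨ u = z := by
    intro s y z hs hy hz hyz u hu
    obtain ⟨a, b, hab, rfl⟩ := Set.ncard_eq_two.mp hs
    simp only [Set.mem_insert_iff, Set.mem_singleton_iff] at hy hz hu
    rcases hy with rfl | rfl <;> rcases hz with rfl | rfl <;> tauto
  have hN2 : ∀ u, T.Adj x2 u → u = x1 ∨ u = x3 := fun u hu =>
    key2 _ x1 x3 hx2' h12.symm h23 h13 u hu
  have hN3 : ∀ u, T.Adj x3 u → u = x2 ∨ u = x4 := fun u hu =>
    key2 _ x2 x4 hx3' h23.symm h34 h24 u hu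
  ----------------------------------------------------------------
  -- Step A : prdn T' + 2 ≤ prdn T
  ----------------------------------------------------------------
  obtain ⟨h, hhP, hhsum⟩ := prdn_exists (T.induce {u : V | u ≠ x3})
  have htwo : 2 ≤ h ⟨x1, h13⟩ + h ⟨x2, h23.ne⟩ := by
    by_cases hz1 : h ⟨x1, h13⟩ = 0
    · obtain ⟨v, ⟨hvadj, hv2⟩, -⟩ := hhP.2 _ hz1
      have hvx2 : (v : V) = x2 := hN1 _ hvadj
      have hv : v = (⟨x2, h23.ne⟩ : {u : V // u ≠ x3}) := Subtype.ext hvx2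
      rw [hv] at hv2; omega
    · by_cases hz2 : h ⟨x2, h23.ne⟩ = 0
      · obtain ⟨v, ⟨hvadj, hv2⟩, -⟩ := hhP.2 _ hz2
        have hv13 : (v : V) = x1 ∨ (v : V) = x3 := hN2 _ hvadj
        have hvx1 : (v : V) = x1 := hv13.resolve_right v.2
        have hv : v = (⟨x1, h13⟩ : {u : V // u ≠ x3}) := Subtype.ext hvx1
        rw [hv] at hv2; omega
      · omega
  set f0 : ↥{u : V | u ≠ x1 ∧ u ≠ x2 ∧ u ≠ x3} → ℕ :=
    fun w => h ⟨w.1, w.2.2.2⟩ with hf0def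
  have hf0P : IsPRDF (T.induce {u : V | u ≠ x1 ∧ u ≠ x2 ∧ u ≠ x3}) f0 := by
    constructor
    · exact fun w => hhP.1 _
    · intro u hu0
      obtain ⟨v, ⟨hvadj, hv2⟩, hvu⟩ := hhP.2 ⟨u.1, u.2.2.2⟩ hu0
      have hvne1 : (v : V) ≠ x1 := by
        intro e
        have h1 : T.Adj u.1 (v : V) := hvadj
        rw [e] at h1
        exact u.2.2.1 (hN1 _ h1.symm)
      have hvne2 : (v : V) ≠ x2 := by
        intro e
        have h1 : T.Adj u.1 (v : V) := hvadj
        rw [e] at h1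
        rcases hN2 _ h1.symm with e1 | e3
        · exact u.2.1 e1
        · exact u.2.2.2 e3
      refine ⟨⟨v.1, hvne1, hvne2, v.2⟩, ⟨hvadj, hv2⟩, ?_⟩
      rintro w ⟨hwadj, hw2⟩
      have hwv : (⟨w.1, w.2.2.2⟩ : {u : V // u ≠ x3}) = v := hvu ⟨w.1, w.2.2.2⟩ ⟨hwadj, hw2⟩
      have hval : (w : V) = (v : V) := congrArg Subtype.val hwv
      exact Subtype.ext hval
  have hpt : ∀ v : V,
      extFun (· ∈ {u : V | u ≠ x3}) h v
      = extFun (· ∈ {u : V | u ≠ x1 ∧ u ≠ x2 ∧ u ≠ x3}) f0 v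
        + ((if v = x1 then h ⟨x1, h13⟩ else 0) + (if v = x2 then h ⟨x2, h23.ne⟩ else 0)) := by
    intro v
    by_cases e1 : v = x1
    · subst e1
      rw [extFun_pos h h13, extFun_neg _ (fun hc => hc.1 rfl), if_pos rfl, if_neg n12]
      omega
    · by_cases e2 : v = x2
      · subst e2
        rw [extFun_pos h h23.ne, extFun_neg _ (fun hc => hc.2.1 rfl), if_neg e1, if_pos rfl]
        omega
      · by_cases e3 : v = x3
        · subst e3
          rw [extFun_neg _ (fun hc => hc rfl), extFun_neg _ (fun hc => hc.2.2 rfl),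
            if_neg e1, if_neg e2]
        · rw [extFun_pos h e3, extFun_pos f0 ⟨e1, e2, e3⟩, if_neg e1, if_neg e2]
          show h ⟨v, e3⟩ = h ⟨v, e3⟩ + (0 + 0)
          omega
  have hsplit : (∑ w : ↥{u : V | u ≠ x3}, h w)
      = (∑ w : ↥{u : V | u ≠ x1 ∧ u ≠ x2 ∧ u ≠ x3}, f0 w)
        + (h ⟨x1, h13⟩ + h ⟨x2, h23.ne⟩) := by
    rw [sum_extFunS {u : V | u ≠ x3} h, sum_extFunS {u : V | u ≠ x1 ∧ u ≠ x2 ∧ u ≠ x3} f0]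
    rw [Finset.sum_congr rfl (fun v _ => hpt v), Finset.sum_add_distrib,
      Finset.sum_add_distrib,
      Finset.sum_ite_eq' Finset.univ x1 (fun _ => h ⟨x1, h13⟩),
      Finset.sum_ite_eq' Finset.univ x2 (fun _ => h ⟨x2, h23.ne⟩)]
    simp
  have hstepA : prdn (T.induce {u : V | u ≠ x1 ∧ u ≠ x2 ∧ u ≠ x3}) + 2 ≤ prdn T := by
    have hle := prdn_le _ f0 hf0P
    have hcomb : prdn (T.induce {u : V | u ≠ x1 ∧ u ≠ x2 ∧ u ≠ x3}) + 2
        ≤ (∑ w : ↥{u : V | u ≠ x1 ∧ u ≠ x2 ∧ u ≠ x3}, f0 w)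
          + (h ⟨x1, h13⟩ + h ⟨x2, h23.ne⟩) := Nat.add_le_add hle htwo
    rw [← hsplit, hhsum, hstab x3] at hcomb
    exact hcomb
  ----------------------------------------------------------------
  -- Step B
  ----------------------------------------------------------------
  simp only [Wset, Set.mem_setOf_eq]
  intro f' hf'P hsum
  show f' ⟨x4, hx4m⟩ = 0
  by_contra hne0
  have hcases : f' ⟨x4, hx4m⟩ = 1 ∨ f' ⟨x4, hx4m⟩ = 2 := by
    have := hf'P.1 ⟨x4, hx4m⟩; omega
  -- extended function
  set F : V → ℕ := extFun (· ∈ {u : V | u ≠ x1 ∧ u ≠ x2 ∧ u ≠ x3}) f' with hFdef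
  have hFv : ∀ (v : V) (hv : v ≠ x1 ∧ v ≠ x2 ∧ v ≠ x3), F v = f' ⟨v, hv⟩ :=
    fun v hv => extFun_pos f' hv
  have hF1 : F x1 = 0 := extFun_neg _ (fun hc => hc.1 rfl)
  have hF2 : F x2 = 0 := extFun_neg _ (fun hc => hc.2.1 rfl)
  have hF3 : F x3 = 0 := extFun_neg _ (fun hc => hc.2.2 rfl)
  have hFx4 : F x4 = f' ⟨x4, hx4m⟩ := hFv x4 hx4m
  have hFle : ∀ v, F v ≤ 2 := by
    intro v
    by_cases hv : v ≠ x1 ∧ v ≠ x2 ∧ v ≠ x3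
    · rw [hFv v hv]; exact hf'P.1 _
    · rw [hFdef,
        extFun_neg (p := (· ∈ {u : V | u ≠ x1 ∧ u ≠ x2 ∧ u ≠ x3})) f' hv]
      omega
  have hsF : (∑ v : V, F v) = prdn (T.induce {u : V | u ≠ x1 ∧ u ≠ x2 ∧ u ≠ x3}) := by
    rw [hFdef, ← sum_extFunS {u : V | u ≠ x1 ∧ u ≠ x2 ∧ u ≠ x3} f']; exact hsum
  rcases hcases with hc1 | hc2
  ----------------------------------------------------------------
  -- Case f' x4 = 1 : contradiction via stability at x4
  ----------------------------------------------------------------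
  · set g : ↥{u : V | u ≠ x4} → ℕ :=
      fun w => if w.1 = x1 then 0 else if w.1 = x2 then 2 else if w.1 = x3 then 0 else F w.1
      with hgdef
    have hgP : IsPRDF (T.induce {u : V | u ≠ x4}) g := by
      constructor
      · intro w
        rw [hgdef]
        dsimp only
        split
        · omega
        · split
          · omega
          · split
            · omega
            · exact hFle _
      · intro u hu
        by_cases e1 : u.1 = x1
        · -- unique neighbor is x2
          refine ⟨⟨x2, h24⟩, ⟨?_, ?_⟩, ?_⟩
          · show T.Adj u.1 x2
            rw [e1]; exact h12
          · rw [hgdef]; dsimp only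
            rw [if_neg (Ne.symm n12), if_pos rfl]
          · rintro w ⟨hwadj, -⟩
            have : (w : V) = x2 := by
              apply hN1
              have h1 : T.Adj u.1 (w : V) := hwadj
              rw [e1] at h1; exact h1
            exact Subtype.ext this
        · by_cases e2 : u.1 = x2
          · exfalso
            rw [hgdef] at hu; dsimp only at hu
            rw [if_neg e1, if_pos e2] at hu
            omega
          · by_cases e3 : u.1 = x3
            · -- unique neighbor is x2
              refine ⟨⟨x2, h24⟩, ⟨?_, ?_⟩, ?_⟩
              · show T.Adj u.1 x2
                rw [e3]; exact h23.symm
              · rw [hgdef]; dsimp only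
                rw [if_neg (Ne.symm n12), if_pos rfl]
              · rintro w ⟨hwadj, -⟩
                have hw24 : (w : V) = x2 ∨ (w : V) = x4 := by
                  apply hN3
                  have h1 : T.Adj u.1 (w : V) := hwadj
                  rw [e3] at h1; exact h1
                exact Subtype.ext (hw24.resolve_right w.2)
            · -- generic vertex
              have hu0 : f' ⟨u.1, e1, e2, e3⟩ = 0 := by
                rw [hgdef] at hu; dsimp only at hu
                rw [if_neg e1, if_neg e2, if_neg e3] at hu
                rw [← hFv u.1 ⟨e1, e2, e3⟩]; exact hu
              obtain ⟨v, ⟨hvadj, hv2⟩, hvu⟩ := hf'P.2 _ hu0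
              have hvne4 : (v : V) ≠ x4 := by
                intro e
                have : v = (⟨x4, hx4m⟩ : {u : V // u ≠ x1 ∧ u ≠ x2 ∧ u ≠ x3}) :=
                  Subtype.ext e
                rw [this, hc1] at hv2; omega
              refine ⟨⟨v.1, hvne4⟩, ⟨hvadj, ?_⟩, ?_⟩
              · rw [hgdef]; dsimp only
                rw [if_neg v.2.1, if_neg v.2.2.1, if_neg v.2.2.2, hFv v.1 v.2]
                exact hv2
              · rintro w ⟨hwadj, hw2⟩
                rw [hgdef] at hw2; dsimp only at hw2
                by_cases w1 : w.1 = x1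
                · rw [if_pos w1] at hw2; omega
                · by_cases w2 : w.1 = x2
                  · exfalso
                    have h1 : T.Adj u.1 (w : V) := hwadj
                    rw [w2] at h1
                    rcases hN2 _ h1.symm with ee | ee
                    · exact e1 ee
                    · exact e3 ee
                  · by_cases w3 : w.1 = x3
                    · rw [if_neg w1, if_neg w2, if_pos w3] at hw2; omega
                    · rw [if_neg w1, if_neg w2, if_neg w3, hFv w.1 ⟨w1, w2, w3⟩] at hw2
                      have := hvu ⟨w.1, w1, w2, w3⟩ ⟨hwadj, hw2⟩
                      have hval : (w : V) = (v : V) := congrArg Subtype.val this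
                      exact Subtype.ext hval
    -- sum computation
    have hptg : ∀ v : V,
        extFun (· ∈ {u : V | u ≠ x4}) g v + (if v = x4 then 1 else 0)
        = F v + (if v = x2 then 2 else 0) := by
      intro v
      by_cases e4 : v = x4
      · subst e4
        rw [extFun_neg _ (fun hc => hc rfl), if_pos rfl, if_neg (Ne.symm h24), hFx4, hc1]
      · rw [extFun_pos g e4, if_neg e4]
        rw [hgdef]; dsimp only
        by_cases e1 : v = x1
        · rw [if_pos e1, if_neg (fun hc => n12 (e1 ▸ hc)), e1, hF1]
        · by_cases e2 : v = x2
          · rw [if_neg e1, if_pos e2, if_pos e2, e2, hF2]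
          · by_cases e3 : v = x3
            · rw [if_neg e1, if_neg e2, if_pos e3, if_neg e2, e3, hF3]
            · rw [if_neg e1, if_neg e2, if_neg e3, if_neg e2]
    have hgs : (∑ w : ↥{u : V | u ≠ x4}, g w)
        = prdn (T.induce {u : V | u ≠ x1 ∧ u ≠ x2 ∧ u ≠ x3}) + 1 := by
      have hA : (∑ v : V, (extFun (· ∈ {u : V | u ≠ x4}) g v + (if v = x4 then 1 else 0)))
          = ∑ v : V, (F v + (if v = x2 then 2 else 0)) :=
        Finset.sum_congr rfl (fun v _ => hptg v)
      rw [Finset.sum_add_distrib, Finset.sum_add_distrib,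
        Finset.sum_ite_eq' Finset.univ x4 (fun _ => 1),
        Finset.sum_ite_eq' Finset.univ x2 (fun _ => 2)] at hA
      simp only [Finset.mem_univ, if_true] at hA
      rw [← sum_extFunS {u : V | u ≠ x4} g, hsF] at hA
      omega
    have hfin := prdn_le _ g hgP
    rw [hgs, hstab x4] at hfin
    omega
  ----------------------------------------------------------------
  -- Case f' x4 = 2 : contradiction via stability at x1
  ----------------------------------------------------------------
  · set g : ↥{u : V | u ≠ x1} → ℕ :=
      fun w => if w.1 = x2 then 1 else if w.1 = x3 then 0 else F w.1
      with hgdef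
    have hgP : IsPRDF (T.induce {u : V | u ≠ x1}) g := by
      constructor
      · intro w
        rw [hgdef]
        dsimp only
        split
        · omega
        · split
          · omega
          · exact hFle _
      · intro u hu
        by_cases e2 : u.1 = x2
        · exfalso
          rw [hgdef] at hu; dsimp only at hu
          rw [if_pos e2] at hu; omega
        · by_cases e3 : u.1 = x3
          · -- unique neighbor with label 2 is x4
            refine ⟨⟨x4, Ne.symm h14⟩, ⟨?_, ?_⟩, ?_⟩
            · show T.Adj u.1 x4
              rw [e3]; exact h34
            · rw [hgdef]; dsimp only
              rw [if_neg (Ne.symm h24), if_neg (fun hc => n34 hc.symm), hFx4]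
              exact hc2
            · rintro w ⟨hwadj, hw2⟩
              have hw24 : (w : V) = x2 ∨ (w : V) = x4 := by
                apply hN3
                have h1 : T.Adj u.1 (w : V) := hwadj
                rw [e3] at h1; exact h1
              rcases hw24 with ee | ee
              · exfalso
                rw [hgdef] at hw2; dsimp only at hw2
                rw [if_pos ee] at hw2; omega
              · exact Subtype.ext ee
          · -- generic vertex
            have hu0 : f' ⟨u.1, u.2, e2, e3⟩ = 0 := by
              rw [hgdef] at hu; dsimp only at hu
              rw [if_neg e2, if_neg e3] at hu
              rw [← hFv u.1 ⟨u.2, e2, e3⟩]; exact hu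
            obtain ⟨v, ⟨hvadj, hv2⟩, hvu⟩ := hf'P.2 _ hu0
            refine ⟨⟨v.1, v.2.1⟩, ⟨hvadj, ?_⟩, ?_⟩
            · rw [hgdef]; dsimp only
              rw [if_neg v.2.2.1, if_neg v.2.2.2, hFv v.1 v.2]
              exact hv2
            · rintro w ⟨hwadj, hw2⟩
              rw [hgdef] at hw2; dsimp only at hw2
              by_cases w2 : w.1 = x2
              · rw [if_pos w2] at hw2; omega
              · by_cases w3 : w.1 = x3
                · rw [if_neg w2, if_pos w3] at hw2; omega
                · rw [if_neg w2, if_neg w3, hFv w.1 ⟨w.2, w2, w3⟩] at hw2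
                  have := hvu ⟨w.1, w.2, w2, w3⟩ ⟨hwadj, hw2⟩
                  have hval : (w : V) = (v : V) := congrArg Subtype.val this
                  exact Subtype.ext hval
    have hptg : ∀ v : V,
        extFun (· ∈ {u : V | u ≠ x1}) g v = F v + (if v = x2 then 1 else 0) := by
      intro v
      by_cases e1 : v = x1
      · subst e1
        rw [extFun_neg _ (fun hc => hc rfl), if_neg n12, hF1]
      · rw [extFun_pos g e1]
        rw [hgdef]; dsimp only
        by_cases e2 : v = x2
        · rw [if_pos e2, if_pos e2, e2, hF2]
        · by_cases e3 : v = x3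
          · rw [if_neg e2, if_pos e3, if_neg e2, e3, hF3]
          · rw [if_neg e2, if_neg e3, if_neg e2]
            omega
    have hgs : (∑ w : ↥{u : V | u ≠ x1}, g w)
        = prdn (T.induce {u : V | u ≠ x1 ∧ u ≠ x2 ∧ u ≠ x3}) + 1 := by
      have hA : (∑ v : V, extFun (· ∈ {u : V | u ≠ x1}) g v)
          = ∑ v : V, (F v + (if v = x2 then 1 else 0)) :=
        Finset.sum_congr rfl (fun v _ => hptg v)
      rw [Finset.sum_add_distrib,
        Finset.sum_ite_eq' Finset.univ x2 (fun _ => 1)] at hA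
      simp only [Finset.mem_univ, if_true] at hA
      rw [← sum_extFunS {u : V | u ≠ x1} g, hsF] at hA
      omega
    have hfin := prdn_le _ g hgP
    rw [hgs, hstab x1] at hfin
    omega
end

section
/- Let T be a perfect Roman domination stable tree of order n ≥ 3 with diameter at least 4, let P = x_1x_2⋯x_k be a longest path of T with d(x_2) = 2, and let f be a γ_R^p-function of T. Then x_3 has no leaf neighbor in T. -/
open SimpleGraph

section Aux

variable {V : Type*} [Fintype V] [DecidableEq V]

lemma sum_update_add (f : V → ℕ) (a : V) (m : ℕ) :
    (∑ v, Function.update f a m v) + f a = (∑ v, f v) + m := by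
  rw [Finset.sum_update_of_mem (Finset.mem_univ a)]
  rw [← Finset.add_sum_erase Finset.univ f (Finset.mem_univ a)]
  rw [Finset.sdiff_singleton_eq_erase]
  omega

lemma prdn_del_le (T : SimpleGraph V) (v : V) (g : V → ℕ) (hgv : g v = 0)
    (hle : ∀ u, g u ≤ 2)
    (h0 : ∀ u, u ≠ v → g u = 0 → ∃! z : V, z ≠ v ∧ T.Adj u z ∧ g z = 2) :
    prdn (T.induce {u | u ≠ v}) ≤ ∑ u, g u := by
  apply Nat.sInf_le
  refine ⟨fun u => g u.1, ⟨fun u => hle u.1, ?_⟩, ?_⟩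
  · rintro ⟨u, hu⟩ hu0
    obtain ⟨z, ⟨hzv, hadj, hz2⟩, huniq⟩ := h0 u hu hu0
    refine ⟨⟨z, hzv⟩, ⟨hadj, hz2⟩, ?_⟩
    rintro ⟨y, hyv⟩ ⟨hya, hy2⟩
    exact Subtype.ext (huniq y ⟨hyv, hya, hy2⟩)
  · calc ∑ u : {u : V | u ≠ v}, g u.1
        = ∑ u ∈ Finset.univ.erase v, g u := by
          rw [Finset.sum_subtype (p := fun u => u ∈ {u : V | u ≠ v})
            (Finset.univ.erase v) (fun x => by simp) g]
      _ = ∑ u, g u := Finset.sum_erase Finset.univ hgv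

omit [Fintype V] [DecidableEq V] in
lemma getVert02_ne {T : SimpleGraph V} {a b : V} (q : T.Walk a b) (hq : q.IsPath)
    (hql : 2 ≤ q.length) : q.getVert 0 ≠ q.getVert 2 := by
  cases q with
  | nil => simp at hql
  | cons h1 q1 =>
    cases q1 with
    | nil => simp at hql
    | cons h2 r =>
      simp only [Walk.getVert_cons_succ, Walk.getVert_zero]
      rw [Walk.cons_isPath_iff] at hq
      intro heq
      exact hq.2 (by rw [heq, Walk.support_cons]; exact List.mem_cons_of_mem _ r.start_mem_support)

omit [Fintype V] in
lemma leaf_endpoint {T : SimpleGraph V} (hT : T.IsTree) {x y : V} (p : T.Walk x y)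
    (hp : p.IsPath) (hlong : ∀ (a b : V) (q : T.Walk a b), q.IsPath → q.length ≤ p.length)
    {z : V} (hz : T.Adj x z) : z = p.getVert 1 := by
  by_cases hzs : z ∈ p.support
  · have huniq := hT.IsAcyclic.path_unique ⟨p.takeUntil z hzs, hp.takeUntil hzs⟩ (Path.singleton hz)
    have heq : p.takeUntil z hzs = Walk.cons hz Walk.nil := congrArg Subtype.val huniq
    have hspec := p.take_spec hzs
    rw [heq] at hspec
    have := congrArg (fun q : T.Walk x y => q.getVert 1) hspec
    simpa using this
  · have hq : (Walk.cons hz.symm p).IsPath := hp.cons hzs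
    have := hlong _ _ _ hq
    simp only [Walk.length_cons] at this
    omega

end Aux

/-- in a stable tree of order ≥ 3 and diameter ≥ 4, if the second
vertex of a longest path has degree 2, the third vertex has no leaf neighbor. -/
theorem stmt17 {V : Type*} [Fintype V] [DecidableEq V] (T : SimpleGraph V)
    (hT : T.IsTree) (hstab : Stable T) (hn : 3 ≤ Fintype.card V)
    (hdiam : ∃ u w : V, 4 ≤ T.dist u w)
    (x y : V) (p : T.Walk x y) (hp : p.IsPath)
    (hlong : ∀ (a b : V) (q : T.Walk a b), q.IsPath → q.length ≤ p.length)
    (hx2 : deg T (p.getVert 1) = 2)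
    (f : V → ℕ) (hf : IsPRDF T f) (hmin : ∑ v, f v = prdn T) :
    ¬ ∃ w : V, T.Adj (p.getVert 2) w ∧ deg T w = 1 := by
  rintro ⟨w, hwadj, hwdeg⟩
  -- the path has length at least 4
  obtain ⟨u0, w0, hd⟩ := hdiam
  have hlen : 4 ≤ p.length := by
    obtain ⟨q, -⟩ := exists_walk_of_dist_ne_zero (by omega : T.dist u0 w0 ≠ 0)
    have h1 : T.dist u0 w0 ≤ q.bypass.length := dist_le _
    have h2 := hlong _ _ q.bypass q.bypass_isPath
    omega
  set x2 := p.getVert 1 with hx2def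
  set x3 := p.getVert 2 with hx3def
  have ha12 : T.Adj x x2 := by
    have := p.adj_getVert_succ (i := 0) (by omega)
    rwa [p.getVert_zero] at this
  have ha23 : T.Adj x2 x3 := p.adj_getVert_succ (by omega)
  have hx13 : x ≠ x3 := by
    have := getVert02_ne p hp (by omega)
    rwa [p.getVert_zero] at this
  have hNx1 : ∀ z, T.Adj x z → z = x2 := fun z hz => leaf_endpoint hT p hp hlong hz
  -- neighbors of x2
  have hNset2 : ({x, x3} : Set V) = T.neighborSet x2 := by
    apply Set.eq_of_subset_of_ncard_le
    · rintro z hz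
      simp only [Set.mem_insert_iff, Set.mem_singleton_iff] at hz
      rcases hz with rfl | rfl
      · exact ha12.symm
      · exact ha23
    · simp only [deg] at hx2
      rw [hx2, Set.ncard_pair hx13]
    · exact Set.toFinite _
  have hNx2 : ∀ z, T.Adj x2 z → z = x ∨ z = x3 := by
    intro z hz
    have : z ∈ ({x, x3} : Set V) := by rw [hNset2]; exact hz
    simpa using this
  -- neighbors of w
  have hNsetw : ({x3} : Set V) = T.neighborSet w := by
    apply Set.eq_of_subset_of_ncard_le
    · rintro z hz
      simp only [Set.mem_singleton_iff] at hz
      subst hz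
      exact hwadj.symm
    · simp only [deg] at hwdeg
      rw [hwdeg, Set.ncard_singleton]
    · exact Set.toFinite _
  have hNw : ∀ z, T.Adj w z → z = x3 := by
    intro z hz
    have : z ∈ ({x3} : Set V) := by rw [hNsetw]; exact hz
    simpa using this
  -- distinctness
  have h12 : x ≠ x2 := ha12.ne
  have h23 : x2 ≠ x3 := ha23.ne
  have hwx3 : w ≠ x3 := hwadj.ne'
  have hwx2 : w ≠ x2 := by
    intro h
    rw [h] at hwdeg
    omega
  have hwx : w ≠ x := by
    intro h
    subst h
    exact h23 (hNx1 x3 hwadj.symm).symm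
  have hfx20 : f x = 0 → f x2 = 2 := by
    intro h0
    obtain ⟨z, ⟨hadj, h2⟩, -⟩ := hf.2 x h0
    rwa [hNx1 z hadj] at h2
  have hb := hf.1 x
  have hcases : f x = 0 ∨ f x = 1 ∨ f x = 2 := by omega
  rcases hcases with hfx | hfx | hfx
  · -- f x = 0, hence f x2 = 2
    have hfx2 : f x2 = 2 := hfx20 hfx
    have hbx3 := hf.1 x3
    have hc3 : f x3 = 0 ∨ f x3 = 1 ∨ f x3 = 2 := by omega
    rcases hc3 with hfx3 | hfx3 | hfx3
    · -- f x3 = 0 : then f w = 1, remove w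
      have hfw : f w = 1 := by
        have hw0 : f w ≠ 0 := by
          intro h0
          obtain ⟨z, ⟨hadj, h2⟩, -⟩ := hf.2 w h0
          rw [hNw z hadj] at h2
          omega
        have hw2 : f w ≠ 2 := by
          intro h2
          obtain ⟨z, -, huniq⟩ := hf.2 x3 hfx3
          have e1 := huniq x2 ⟨ha23.symm, hfx2⟩
          have e2 := huniq w ⟨hwadj, h2⟩
          exact hwx2 (e2.trans e1.symm)
        have := hf.1 w
        omega
      set g := Function.update f w 0 with hgdef
      have hgapp : ∀ u, u ≠ w → g u = f u := fun u h => by rw [hgdef]; exact Function.update_of_ne h 0 f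
      have hsum : (∑ v, g v) + 1 = ∑ v, f v := by
        have := sum_update_add f w 0
        rw [← hgdef] at this
        omega
      have hgw : g w = 0 := by rw [hgdef]; exact Function.update_self w 0 f
      have hkey := prdn_del_le T w g hgw
        (fun u => by
          by_cases h : u = w
          · rw [h, hgw]; omega
          · rw [hgapp u h]; exact hf.1 u)
        (by
          intro u huw hu0
          rw [hgapp u huw] at hu0
          obtain ⟨z, ⟨hadj, h2⟩, huniq⟩ := hf.2 u hu0
          have hzw : z ≠ w := by
            intro h
            rw [h, hfw] at h2
            omega
          refine ⟨z, ⟨hzw, hadj, by rw [hgapp z hzw]; exact h2⟩, ?_⟩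
          rintro y ⟨hyw, hya, hy2⟩
          exact huniq y ⟨hya, by rwa [hgapp y hyw] at hy2⟩)
      rw [hstab w] at hkey
      omega
    · -- f x3 = 1 : remove x, set g x2 = 1
      set g := Function.update f x2 1 with hgdef
      have hgapp : ∀ u, u ≠ x2 → g u = f u := fun u h => by rw [hgdef]; exact Function.update_of_ne h 1 f
      have hgx2 : g x2 = 1 := by rw [hgdef]; exact Function.update_self x2 1 f
      have hsum : (∑ v, g v) + 2 = (∑ v, f v) + 1 := by
        have := sum_update_add f x2 1
        rw [← hgdef] at this
        omega
      have hkey := prdn_del_le T x g (by rw [hgapp x h12]; exact hfx)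
        (fun u => by
          by_cases h : u = x2
          · rw [h, hgx2]; omega
          · rw [hgapp u h]; exact hf.1 u)
        (by
          intro u hux hu0
          have hux2 : u ≠ x2 := by
            intro h
            rw [h, hgx2] at hu0
            omega
          rw [hgapp u hux2] at hu0
          obtain ⟨z, ⟨hadj, h2⟩, huniq⟩ := hf.2 u hu0
          have hzx : z ≠ x := by
            intro h
            rw [h, hfx] at h2
            omega
          have hzx2 : z ≠ x2 := by
            intro h
            subst h
            rcases hNx2 u hadj.symm with rfl | rfl
            · exact hux rfl
            · rw [hfx3] at hu0; omega
          refine ⟨z, ⟨hzx, hadj, by rw [hgapp z hzx2]; exact h2⟩, ?_⟩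
          rintro y ⟨hyx, hya, hy2⟩
          have hyx2 : y ≠ x2 := by
            intro h
            rw [h, hgx2] at hy2
            omega
          exact huniq y ⟨hya, by rwa [hgapp y hyx2] at hy2⟩)
      rw [hstab x] at hkey
      omega
    · -- f x3 = 2 : remove x, set g x2 = 0
      set g := Function.update f x2 0 with hgdef
      have hgapp : ∀ u, u ≠ x2 → g u = f u := fun u h => by rw [hgdef]; exact Function.update_of_ne h 0 f
      have hgx2 : g x2 = 0 := by rw [hgdef]; exact Function.update_self x2 0 f
      have hsum : (∑ v, g v) + 2 = ∑ v, f v := by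
        have := sum_update_add f x2 0
        rw [← hgdef] at this
        omega
      have hkey := prdn_del_le T x g (by rw [hgapp x h12]; exact hfx)
        (fun u => by
          by_cases h : u = x2
          · rw [h, hgx2]; omega
          · rw [hgapp u h]; exact hf.1 u)
        (by
          intro u hux hu0
          rcases eq_or_ne u x2 with rfl | hux2
          · -- u = x2 : x3 works
            refine ⟨x3, ⟨Ne.symm hx13, ha23, by rw [hgapp x3 (Ne.symm h23)]; exact hfx3⟩, ?_⟩
            rintro y ⟨hyx, hya, hy2⟩
            rcases hNx2 y hya with rfl | rfl
            · exact absurd rfl hyx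
            · rfl
          · rw [hgapp u hux2] at hu0
            obtain ⟨z, ⟨hadj, h2⟩, huniq⟩ := hf.2 u hu0
            have hzx : z ≠ x := by
              intro h
              rw [h, hfx] at h2
              omega
            have hzx2 : z ≠ x2 := by
              intro h
              subst h
              rcases hNx2 u hadj.symm with rfl | rfl
              · exact hux rfl
              · rw [hfx3] at hu0; omega
            refine ⟨z, ⟨hzx, hadj, by rw [hgapp z hzx2]; exact h2⟩, ?_⟩
            rintro y ⟨hyx, hya, hy2⟩
            have hyx2 : y ≠ x2 := by
              intro h
              rw [h, hgx2] at hy2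
              omega
            exact huniq y ⟨hya, by rwa [hgapp y hyx2] at hy2⟩)
      rw [hstab x] at hkey
      omega
  · -- f x = 1 : remove x
    set g := Function.update f x 0 with hgdef
    have hgapp : ∀ u, u ≠ x → g u = f u := fun u h => by rw [hgdef]; exact Function.update_of_ne h 0 f
    have hsum : (∑ v, g v) + 1 = ∑ v, f v := by
      have := sum_update_add f x 0
      rw [← hgdef] at this
      omega
    have hgx : g x = 0 := by rw [hgdef]; exact Function.update_self x 0 f
    have hkey := prdn_del_le T x g hgx
      (fun u => by
        by_cases h : u = x
        · rw [h, hgx]; omega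
        · rw [hgapp u h]; exact hf.1 u)
      (by
        intro u hux hu0
        rw [hgapp u hux] at hu0
        obtain ⟨z, ⟨hadj, h2⟩, huniq⟩ := hf.2 u hu0
        have hzx : z ≠ x := by
          intro h
          rw [h, hfx] at h2
          omega
        refine ⟨z, ⟨hzx, hadj, by rw [hgapp z hzx]; exact h2⟩, ?_⟩
        rintro y ⟨hyx, hya, hy2⟩
        exact huniq y ⟨hya, by rwa [hgapp y hyx] at hy2⟩)
    rw [hstab x] at hkey
    omega
  · -- f x = 2
    rcases eq_or_ne (f x2) 0 with hfx2 | hfx2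
    · -- f x2 = 0 : remove x, set g x2 = 1
      set g := Function.update (Function.update f x 0) x2 1 with hgdef
      have hgapp : ∀ u, u ≠ x → u ≠ x2 → g u = f u := fun u h h2 => by
        rw [hgdef, Function.update_of_ne h2 1 _, Function.update_of_ne h 0 f]
      have hgx : g x = 0 := by
        rw [hgdef, Function.update_of_ne h12 1 _, Function.update_self]
      have hgx2 : g x2 = 1 := by rw [hgdef]; exact Function.update_self x2 1 _
      have hsum : (∑ v, g v) + 1 = ∑ v, f v := by
        have h1 := sum_update_add f x 0
        have h2 := sum_update_add (Function.update f x 0) x2 1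
        rw [← hgdef] at h2
        have h3 : Function.update f x 0 x2 = f x2 := Function.update_of_ne (Ne.symm h12) 0 f
        omega
      have hkey := prdn_del_le T x g hgx
        (fun u => by
          by_cases h : u = x
          · rw [h, hgx]; omega
          · by_cases h2 : u = x2
            · rw [h2, hgx2]; omega
            · rw [hgapp u h h2]; exact hf.1 u)
        (by
          intro u hux hu0
          have hux2 : u ≠ x2 := by
            intro h
            rw [h, hgx2] at hu0
            omega
          rw [hgapp u hux hux2] at hu0
          obtain ⟨z, ⟨hadj, h2⟩, huniq⟩ := hf.2 u hu0
          have hzx : z ≠ x := by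
            intro h
            subst h
            exact hux2 (hNx1 u hadj.symm)
          have hzx2 : z ≠ x2 := by
            intro h
            rw [h, hfx2] at h2
            omega
          refine ⟨z, ⟨hzx, hadj, by rw [hgapp z hzx hzx2]; exact h2⟩, ?_⟩
          rintro y ⟨hyx, hya, hy2⟩
          have hyx2 : y ≠ x2 := by
            intro h
            rw [h, hgx2] at hy2
            omega
          exact huniq y ⟨hya, by rwa [hgapp y hyx hyx2] at hy2⟩)
      rw [hstab x] at hkey
      omega
    · -- f x2 ≠ 0 : remove x
      set g := Function.update f x 0 with hgdef
      have hgapp : ∀ u, u ≠ x → g u = f u := fun u h => by rw [hgdef]; exact Function.update_of_ne h 0 f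
      have hsum : (∑ v, g v) + 2 = ∑ v, f v := by
        have := sum_update_add f x 0
        rw [← hgdef] at this
        omega
      have hgx : g x = 0 := by rw [hgdef]; exact Function.update_self x 0 f
      have hkey := prdn_del_le T x g hgx
        (fun u => by
          by_cases h : u = x
          · rw [h, hgx]; omega
          · rw [hgapp u h]; exact hf.1 u)
        (by
          intro u hux hu0
          rw [hgapp u hux] at hu0
          have hux2 : u ≠ x2 := by
            intro h
            rw [h] at hu0
            exact hfx2 hu0
          obtain ⟨z, ⟨hadj, h2⟩, huniq⟩ := hf.2 u hu0
          have hzx : z ≠ x := by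
            intro h
            subst h
            exact hux2 (hNx1 u hadj.symm)
          refine ⟨z, ⟨hzx, hadj, by rw [hgapp z hzx]; exact h2⟩, ?_⟩
          rintro y ⟨hyx, hya, hy2⟩
          exact huniq y ⟨hya, by rwa [hgapp y hyx] at hy2⟩)
      rw [hstab x] at hkey
      omega
end
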